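/- arXiv:0810.1206 — 5 statements merged into one kernel-verified Lean document; each statement's English description precedes it below -/
import Mathlib

section
/- Let q ∈ [1,∞) and p ∈ [1,∞], let B be an open, relatively compact, symmetric neighbourhood of e, and let f ∈ (L^q,L^p)(G). Then for every x ∈ G the convolution value (|f|^q ∗ χ_B)(x) = ∫_G |f(y)|^q χ_B(y⁻¹x) dλ(y) is finite. -/
/-! Finiteness of `blockNorm` forces `‖f · χ_{yB}‖_q < ∞` for all `y` outside a null set.
Since nonempty open sets have positive Haar measure and `B` is symmetric, every point lies in
some translate `yB` with such a good `y`. So the measure `|f|^q λ` is finite near every point,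
hence on the compact set `x · closure B`, and the convolution value at `x` is `∫_{xB} |f|^q`. -/

open MeasureTheory ENNReal NNReal Set Filter Topology Pointwise

variable {G : Type*} [Group G] [TopologicalSpace G] [IsTopologicalGroup G]
  [T2Space G] [LocallyCompactSpace G] [SigmaCompactSpace G]
  [MeasurableSpace G] [BorelSpace G]

/-- The norm `_B‖f‖_{q,p}`. -/
noncomputable def blockNorm {E : Type*} [NormedAddCommGroup E]
    (μ : Measure G) (q p : ℝ≥0∞) (B : Set G) (f : G → E) : ℝ≥0∞ :=
  if p = ∞ then essSup (fun y => eLpNorm ((y • B).indicator f) q μ) μ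
  else (∫⁻ y, eLpNorm ((y • B).indicator f) q μ ^ p.toReal ∂μ) ^ (1 / p.toReal)

/-- The norm `‖f‖^π_{q,p}` associated to a partition `π`. -/
noncomputable def partNorm {E : Type*} [NormedAddCommGroup E]
    (μ : Measure G) (q p : ℝ≥0∞) (π : Set (Set G)) (f : G → E) : ℝ≥0∞ :=
  if p = ∞ then ⨆ A ∈ π, eLpNorm (A.indicator f) q μ
  else (∑' A : π, eLpNorm ((A : Set G).indicator f) q μ ^ p.toReal) ^ (1 / p.toReal)

/-- `π` is a `U`–`V` uniform partition of `G`. -/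
def IsUniformPartition (π : Set (Set G)) (U V : Set G) : Prop :=
  π.Countable ∧ (∀ A ∈ π, MeasurableSet A) ∧ π.PairwiseDisjoint id ∧
    ⋃₀ π = univ ∧ ∀ A ∈ π, ∃ x ∈ A, x • U ⊆ A ∧ A ⊆ x • V

/-- The ball `B(x,r)` for the homogeneous norm `nm`. -/
def gball (nm : G → ℝ) (x : G) (r : ℝ) : Set G := {y | nm (x⁻¹ * y) < r}

/-- The norm `‖f‖_{q,p,α}`. -/
noncomputable def alphaNorm {E : Type*} [NormedAddCommGroup E]
    (μ : Measure G) (nm : G → ℝ) (πr : ℝ → Set (Set G))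
    (q p α : ℝ≥0∞) (f : G → E) : ℝ≥0∞ :=
  ⨆ (r : ℝ) (_ : 0 < r),
    μ (gball nm 1 r) ^ (α⁻¹.toReal - q⁻¹.toReal) * partNorm μ q p (πr r) f

/-- The decreasing rearrangement `f*`. -/
noncomputable def rearr (μ : Measure G) (f : G → ℂ) (t : ℝ≥0∞) : ℝ≥0∞ :=
  sInf {s : ℝ≥0∞ | 0 < s ∧ μ {x | s < (‖f x‖₊ : ℝ≥0∞)} ≤ t}

/-- The weak Lorentz quasinorm `‖f‖*_{α,∞}`. -/
noncomputable def weakNorm (μ : Measure G) (α : ℝ≥0∞) (f : G → ℂ) : ℝ≥0∞ :=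
  ⨆ (t : ℝ≥0∞) (_ : 0 < t) (_ : t ≠ ∞), t ^ α⁻¹.toReal * rearr μ f t

theorem MeasureTheory.exists_lt_top_of_lintegral_ne_top {α : Type*} [MeasurableSpace α]
    {μ : Measure α} {F : α → ℝ≥0∞} (hF : ∫⁻ y, F y ∂μ ≠ ∞) {A : Set α}
    (hA : MeasurableSet A) (hμA : μ A ≠ 0) : ∃ y ∈ A, F y < ∞ := by
  -- `F` need not be measurable, so `ae_lt_top` does not apply; the measurable `A` replaces it.
  by_contra! hinf
  refine hF (eq_top_iff.2 ?_)
  calc ∞ = ∫⁻ _ in A, ∞ ∂μ := by rw [setLIntegral_const, top_mul hμA]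
    _ ≤ ∫⁻ y in A, F y ∂μ := setLIntegral_mono' hA hinf
    _ ≤ ∫⁻ y, F y ∂μ := setLIntegral_le_lintegral A F

theorem exists_eLpNorm_indicator_smul_lt_top {H E : Type*} [Group H] [MeasurableSpace H]
    [NormedAddCommGroup E] {μ : Measure H} {q p : ℝ≥0∞} (hp : p ≠ 0) {B : Set H}
    {f : H → E} (hfin : blockNorm μ q p B f < ∞) {A : Set H} (hA : MeasurableSet A)
    (hμA : μ A ≠ 0) : ∃ y ∈ A, eLpNorm ((y • B).indicator f) q μ < ∞ := by
  by_cases hp_top : p = ∞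
  · rw [blockNorm, if_pos hp_top] at hfin
    obtain ⟨y, hyA, hy⟩ := Measure.exists_mem_of_measure_ne_zero_of_ae hμA
      (ae_restrict_of_ae (ae_le_essSup fun y => eLpNorm ((y • B).indicator f) q μ))
    exact ⟨y, hyA, hy.trans_lt hfin⟩
  · have hpt : 0 < p.toReal := toReal_pos hp hp_top
    rw [blockNorm, if_neg hp_top, rpow_lt_top_iff_of_pos (by positivity)] at hfin
    obtain ⟨y, hyA, hy⟩ := exists_lt_top_of_lintegral_ne_top hfin.ne hA hμA
    exact ⟨y, hyA, (rpow_lt_top_iff_of_pos hpt).1 hy⟩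

theorem inv_mul_mem_iff_mem_smul_set {H : Type*} [Group H] {B : Set H} (hB : B⁻¹ = B)
    {x y : H} : y⁻¹ * x ∈ B ↔ y ∈ x • B := by
  rw [mem_smul_set_iff_inv_smul_mem, smul_eq_mul, ← Set.inv_mem_inv, hB, mul_inv_rev, inv_inv]

theorem setLIntegral_rpow_enorm_lt_top {α E : Type*} [MeasurableSpace α] [NormedAddCommGroup E]
    {μ : Measure α} {q : ℝ≥0∞} (hq0 : q ≠ 0) (hq : q ≠ ∞) {s : Set α} (hs : MeasurableSet s)
    {f : α → E} (h : eLpNorm (s.indicator f) q μ < ∞) :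
    ∫⁻ y in s, ‖f y‖ₑ ^ q.toReal ∂μ < ∞ := by
  rwa [eLpNorm_indicator_eq_eLpNorm_restrict hs,
    eLpNorm_lt_top_iff_lintegral_rpow_enorm_lt_top hq0 hq] at h

theorem exists_mem_smul_eLpNorm_indicator_lt_top {H E : Type*} [Group H] [TopologicalSpace H]
    [ContinuousMul H] [MeasurableSpace H] [OpensMeasurableSpace H] [NormedAddCommGroup E]
    {μ : Measure H} [μ.IsOpenPosMeasure] {q p : ℝ≥0∞} (hp : p ≠ 0) {B : Set H}
    (hBopen : IsOpen B) (hBmem : (1 : H) ∈ B) (hBsymm : B⁻¹ = B) {f : H → E}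
    (hfin : blockNorm μ q p B f < ∞) (z : H) :
    ∃ y : H, eLpNorm ((y • B).indicator f) q μ < ∞ ∧ z ∈ y • B := by
  obtain ⟨y, hyz, hy⟩ := exists_eLpNorm_indicator_smul_lt_top hp hfin
    (hBopen.smul z).measurableSet ((hBopen.smul z).measure_ne_zero μ ⟨z, 1, hBmem, mul_one z⟩)
  exact ⟨y, hy, mem_smul_set_iff_inv_smul_mem.2 ((inv_mul_mem_iff_mem_smul_set hBsymm).2 hyz)⟩

theorem lintegral_mul_indicator_inv_mul {H : Type*} [Group H] [MeasurableSpace H]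
    {μ : Measure H} {B : Set H} (hB : B⁻¹ = B) (x : H) (hxB : MeasurableSet (x • B))
    (g : H → ℝ≥0∞) :
    ∫⁻ y, g y * B.indicator (fun _ => 1) (y⁻¹ * x) ∂μ = ∫⁻ y in x • B, g y ∂μ := by
  rw [← lintegral_indicator hxB]
  congr with y
  by_cases hy : y ∈ x • B
  · rw [indicator_of_mem ((inv_mul_mem_iff_mem_smul_set hB).2 hy), indicator_of_mem hy, mul_one]
  · rw [indicator_of_notMem (mt (inv_mul_mem_iff_mem_smul_set hB).1 hy), indicator_of_notMem hy,
      mul_zero]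

theorem statement0_general
    (μ : Measure G) [μ.IsHaarMeasure]
    (q p : ℝ≥0∞) (hq1 : 1 ≤ q) (hq : q ≠ ∞) (hp1 : 1 ≤ p)
    (B : Set G) (hBopen : IsOpen B) (hBmem : (1 : G) ∈ B)
    (hBcpt : IsCompact (closure B)) (hBsymm : B⁻¹ = B)
    (f : G → ℂ)
    (hfin : blockNorm μ q p B f < ∞) :
    ∀ x : G,
      (∫⁻ y, (‖f y‖₊ : ℝ≥0∞) ^ q.toReal * B.indicator (fun _ => (1 : ℝ≥0∞)) (y⁻¹ * x) ∂μ) < ∞ := by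
  intro x
  have hq0 : q ≠ 0 := (one_pos.trans_le hq1).ne'
  set ν := μ.withDensity fun y => ‖f y‖ₑ ^ q.toReal
  have hν : ∀ y : G, eLpNorm ((y • B).indicator f) q μ < ∞ → ν (y • B) < ∞ := fun y hy => by
    rw [withDensity_apply _ (hBopen.smul y).measurableSet]
    exact setLIntegral_rpow_enorm_lt_top hq0 hq (hBopen.smul y).measurableSet hy
  have hνK : ν (x • closure B) < ∞ := (hBcpt.smul x).measure_lt_top_of_nhdsWithin fun z _ => by
    obtain ⟨y, hy, hzy⟩ := exists_mem_smul_eLpNorm_indicator_lt_top (one_pos.trans_le hp1).ne'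
      hBopen hBmem hBsymm hfin z
    exact ⟨y • B, mem_nhdsWithin_of_mem_nhds ((hBopen.smul y).mem_nhds hzy), hν y hy⟩
  calc ∫⁻ y, (‖f y‖₊ : ℝ≥0∞) ^ q.toReal * B.indicator (fun _ => (1 : ℝ≥0∞)) (y⁻¹ * x) ∂μ
      = ν (x • B) := by
        simp only [← enorm_eq_nnnorm]
        rw [lintegral_mul_indicator_inv_mul hBsymm x (hBopen.smul x).measurableSet,
          withDensity_apply _ (hBopen.smul x).measurableSet]
    _ ≤ ν (x • closure B) := measure_mono (smul_set_mono subset_closure)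
    _ < ∞ := hνK

theorem statement0
    (μ : Measure G) [μ.IsHaarMeasure]
    (q p : ℝ≥0∞) (hq1 : 1 ≤ q) (hq : q ≠ ∞) (hp1 : 1 ≤ p)
    (B : Set G) (hBopen : IsOpen B) (hBmem : (1 : G) ∈ B)
    (hBcpt : IsCompact (closure B)) (hBsymm : B⁻¹ = B)
    (f : G → ℂ) (hf : AEStronglyMeasurable f μ)
    (hfin : blockNorm μ q p B f < ∞) :
    ∀ x : G,
      (∫⁻ y, (‖f y‖₊ : ℝ≥0∞) ^ q.toReal * B.indicator (fun _ => (1 : ℝ≥0∞)) (y⁻¹ * x) ∂μ) < ∞ :=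
  statement0_general μ q p hq1 hq hp1 B hBopen hBmem hBcpt hBsymm f hfin
end

section
/- Let B₁ and B₂ be two open, relatively compact, symmetric neighbourhoods of e and let p,q ∈ [1,∞]. Then there exists a constant C = C(B₁,B₂,p,q) > 0 such that _{B₂}‖f‖_{q,p} ≤ C · _{B₁}‖f‖_{q,p} for every measurable function f on G. In particular the space (L^q,L^p)(G) does not depend on the choice of the neighbourhood B used to define it. -/
open MeasureTheory ENNReal NNReal Set Filter Topology Pointwise

variable {G : Type*} [Group G] [TopologicalSpace G] [IsTopologicalGroup G]
  [T2Space G] [LocallyCompactSpace G] [SigmaCompactSpace G]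
  [MeasurableSpace G] [BorelSpace G]

/-!
Cover the relatively compact set `B₂` by finitely many translates `x • B₁`, `x ∈ t`. The triangle
inequality in `L^q` gives `‖f χ_{y B₂}‖_q ≤ ∑_{x ∈ t} ‖f χ_{y x B₁}‖_q` for every `y`; taking
`L^p(dy)` norms, Minkowski's inequality and the fact that right translation by `x` multiplies Haar
measure by the modular function `Δ(x)` give
`_{B₂}‖f‖_{q,p} ≤ (∑_{x ∈ t} Δ(x)^{1/p}) · _{B₁}‖f‖_{q,p}`.
Minkowski's inequality needs `y ↦ ‖f χ_{y B}‖_q` to be measurable; this follows from the lower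
semicontinuity of `y ↦ ν (y • B)` for open `B` and inner regular `ν`.
-/

namespace MeasureTheory

section Measurability

variable {α : Type*} [MeasurableSpace α]

theorem essSup_le_iff_measure_lt_eq_zero {g : α → ℝ≥0∞} {ν : Measure α} {c : ℝ≥0∞} :
    essSup g ν ≤ c ↔ ν {x | c < g x} = 0 := by
  simp only [← not_le, ← ae_iff]
  exact ⟨fun h => (ENNReal.ae_le_essSup g).mono fun x hx => hx.trans h, essSup_le_of_ae_le c⟩

theorem Measure.measurable_essSup {g : α → ℝ≥0∞} (hg : Measurable g) :
    Measurable fun ν : Measure α => essSup g ν := by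
  refine measurable_of_Iic fun c => ?_
  simp only [preimage, mem_Iic, essSup_le_iff_measure_lt_eq_zero]
  exact Measure.measurable_coe (measurableSet_lt measurable_const hg) (measurableSet_singleton 0)

theorem Measure.measurable_eLpNorm {E : Type*} [NormedAddCommGroup E] {f : α → E}
    (hf : StronglyMeasurable f) (q : ℝ≥0∞) :
    Measurable fun ν : Measure α => eLpNorm f q ν := by
  rcases eq_or_ne q 0 with rfl | hq0
  · simp only [eLpNorm_exponent_zero, measurable_const]
  rcases eq_or_ne q ∞ with rfl | hq_top
  · simp only [eLpNorm_exponent_top, eLpNormEssSup]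
    exact Measure.measurable_essSup hf.enorm
  · simp only [eLpNorm_eq_lintegral_rpow_enorm_toReal hq0 hq_top]
    exact (Measure.measurable_lintegral (hf.enorm.pow_const _)).pow_const _

end Measurability

theorem eLpNorm_indicator_le_sum_of_subset_biUnion {α ι E : Type*} [MeasurableSpace α]
    [NormedAddCommGroup E] {μ : Measure α} {q : ℝ≥0∞} (hq : 1 ≤ q) {A : Set α} {C : ι → Set α}
    {t : Finset ι} (hA : A ⊆ ⋃ i ∈ t, C i) (hC : ∀ i ∈ t, MeasurableSet (C i)) {f : α → E}
    (hf : AEStronglyMeasurable f μ) :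
    eLpNorm (A.indicator f) q μ ≤ ∑ i ∈ t, eLpNorm ((C i).indicator f) q μ := by
  set F : ι → α → ℝ := fun i x => ‖(C i).indicator f x‖
  have hF : ∀ i x, 0 ≤ F i x := fun _ _ => norm_nonneg _
  calc eLpNorm (A.indicator f) q μ ≤ eLpNorm (∑ i ∈ t, F i) q μ := by
        refine eLpNorm_mono_real fun x => ?_
        rw [Finset.sum_apply]
        by_cases hx : x ∈ A
        · obtain ⟨i, hi, hxi⟩ := mem_iUnion₂.mp (hA hx)
          calc ‖A.indicator f x‖ = F i x := by
                simp only [F, indicator_of_mem hx, indicator_of_mem hxi]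
            _ ≤ ∑ j ∈ t, F j x := Finset.single_le_sum (fun j _ => hF j x) hi
        · rw [indicator_of_notMem hx, norm_zero]
          exact Finset.sum_nonneg fun j _ => hF j x
    _ ≤ ∑ i ∈ t, eLpNorm (F i) q μ :=
        eLpNorm_sum_le (fun i hi => (hf.indicator (hC i hi)).norm) hq
    _ = ∑ i ∈ t, eLpNorm ((C i).indicator f) q μ := by simp only [F, eLpNorm_norm]

end MeasureTheory

open MeasureTheory

section TopologicalGroup

variable {G : Type*} [Group G] [TopologicalSpace G] [IsTopologicalGroup G]

theorem eventually_subset_smul_of_isCompact {K B : Set G} (hK : IsCompact K) (hB : IsOpen B)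
    {y : G} (hKB : K ⊆ y • B) : ∀ᶠ z in 𝓝 y, K ⊆ z • B := by
  rw [subset_smul_set_iff] at hKB
  obtain ⟨V, hV, hVK⟩ := compact_open_separated_mul_left (hK.smul y⁻¹) hB hKB
  have hlim : Tendsto (fun z => z⁻¹ * y) (𝓝 y) (𝓝 1) := by
    have hcont : Continuous fun z : G => z⁻¹ * y := by fun_prop
    simpa using hcont.tendsto y
  filter_upwards [hlim hV] with z hz
  rw [subset_smul_set_iff, show z⁻¹ = (z⁻¹ * y) * y⁻¹ by group, mul_smul]
  exact (smul_set_subset_mul (s := V) hz).trans hVK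

variable [MeasurableSpace G]

theorem lowerSemicontinuous_measure_smul [OpensMeasurableSpace G] (ν : Measure G) [ν.InnerRegular]
    {B : Set G} (hB : IsOpen B) : LowerSemicontinuous fun y : G => ν (y • B) := by
  intro y c (hc : c < ν (y • B))
  rw [(hB.smul y).measurableSet.measure_eq_iSup_isCompact] at hc
  simp only [lt_iSup_iff] at hc
  obtain ⟨K, hKB, hK, hcK⟩ := hc
  filter_upwards [eventually_subset_smul_of_isCompact hK hB hKB] with z hz
  exact hcK.trans_le (measure_mono hz)

theorem measurable_restrict_smul [OpensMeasurableSpace G] (μ : Measure G) [μ.InnerRegular]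
    [SigmaFinite μ] {B : Set G} (hB : IsOpen B) : Measurable fun y : G => μ.restrict (y • B) := by
  refine Measure.measurable_of_measurable_coe _ fun S hS => ?_
  simp only [Measure.restrict_apply hS, inter_comm S, ← Measure.restrict_apply' hS]
  exact (lowerSemicontinuous_measure_smul (μ.restrict S) hB).measurable

variable [BorelSpace G] [LocallyCompactSpace G]

theorem Measure.regular_of_isHaarMeasure [SigmaCompactSpace G] (μ : Measure G)
    [μ.IsHaarMeasure] : μ.Regular := by
  have hμ : μ = Measure.haarScalarFactor μ Measure.haar • Measure.haar := by
    refine (Measure.ext_iff_of_iUnion_eq_univ (iUnion_compactCovering G)).2 fun n => ?_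
    ext s hs
    simp only [Measure.restrict_apply hs, Measure.smul_apply]
    exact Measure.measure_isMulInvariant_eq_smul_of_isCompact_closure _ _
      ((isCompact_compactCovering G n).closure_of_subset inter_subset_right)
  rw [hμ]
  infer_instance

theorem eLpNorm_comp_mul_right {ε : Type*} [TopologicalSpace ε] [ContinuousENorm ε]
    (μ : Measure G) [μ.IsHaarMeasure] [μ.InnerRegular] (F : G → ε) (p : ℝ≥0∞) (x : G) :
    eLpNorm (fun y => F (y * x)) p μ =
      Measure.modularCharacterFun x ^ p.toReal⁻¹ • eLpNorm F p μ := by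
  rw [← eLpNorm_smul_measure_of_ne_zero' (Measure.modularCharacterFun_pos x).ne',
    ← Measure.map_right_mul_eq_modularCharacterFun_smul]
  exact ((Homeomorph.mulRight x).measurableEmbedding.eLpNorm_map_measure).symm

end TopologicalGroup

section BlockNorm

variable {G E : Type*} [Group G] [MeasurableSpace G] [NormedAddCommGroup E] {μ : Measure G}
  {q p : ℝ≥0∞} {B B₁ B₂ : Set G}

noncomputable def localNorm (μ : Measure G) (q : ℝ≥0∞) (B : Set G) (f : G → E) (y : G) :
    ℝ≥0∞ :=
  eLpNorm ((y • B).indicator f) q μ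

theorem blockNorm_eq_eLpNorm_localNorm (hp : p ≠ 0) (f : G → E) :
    blockNorm μ q p B f = eLpNorm (localNorm μ q B f) p μ := by
  unfold blockNorm localNorm
  split_ifs with hp_top
  · simp only [hp_top, eLpNorm_exponent_top, eLpNormEssSup, enorm_eq_self]
  · simp only [eLpNorm_eq_lintegral_rpow_enorm_toReal hp hp_top, enorm_eq_self]

variable [TopologicalSpace G] [IsTopologicalGroup G] [OpensMeasurableSpace G]

theorem localNorm_eq_eLpNorm_restrict (hB : IsOpen B) (f : G → E) :
    localNorm μ q B f = fun y => eLpNorm f q (μ.restrict (y • B)) :=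
  funext fun y => eLpNorm_indicator_eq_eLpNorm_restrict (hB.smul y).measurableSet

theorem localNorm_congr_ae (hB : IsOpen B) {f g : G → E} (hfg : f =ᵐ[μ] g) :
    localNorm μ q B f = localNorm μ q B g := by
  simp only [localNorm_eq_eLpNorm_restrict hB]
  exact funext fun y => eLpNorm_congr_ae (ae_restrict_of_ae hfg)

theorem measurable_localNorm [μ.InnerRegular] [SigmaFinite μ] (hB : IsOpen B) {f : G → E}
    (hf : StronglyMeasurable f) : Measurable (localNorm μ q B f) := by
  rw [localNorm_eq_eLpNorm_restrict hB]
  exact (Measure.measurable_eLpNorm hf q).comp (measurable_restrict_smul μ hB)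

theorem localNorm_le_sum_of_subset_biUnion_smul (hq : 1 ≤ q) (hB₁ : IsOpen B₁) {t : Finset G}
    (hcov : B₂ ⊆ ⋃ x ∈ t, x • B₁) {f : G → E} (hf : AEStronglyMeasurable f μ) (y : G) :
    localNorm μ q B₂ f y ≤ ∑ x ∈ t, localNorm μ q B₁ f (y * x) := by
  refine eLpNorm_indicator_le_sum_of_subset_biUnion hq ?_
    (fun x _ => (hB₁.smul (y * x)).measurableSet) hf
  calc y • B₂ ⊆ y • ⋃ x ∈ t, x • B₁ := smul_set_mono hcov
    _ = ⋃ x ∈ t, (y * x) • B₁ := by simp only [smul_set_iUnion₂, smul_smul]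

theorem blockNorm_le_of_subset_biUnion_smul [BorelSpace G] [LocallyCompactSpace G]
    [μ.IsHaarMeasure] [μ.InnerRegular] [SigmaFinite μ] (hq : 1 ≤ q) (hp : 1 ≤ p)
    (hB₁ : IsOpen B₁) {t : Finset G} (hcov : B₂ ⊆ ⋃ x ∈ t, x • B₁) {f : G → E}
    (hf : AEStronglyMeasurable f μ) :
    blockNorm μ q p B₂ f ≤
      (∑ x ∈ t, Measure.modularCharacterFun x ^ p.toReal⁻¹ : ℝ≥0) * blockNorm μ q p B₁ f := by
  have hp0 : p ≠ 0 := (zero_lt_one.trans_le hp).ne'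
  set F := localNorm μ q B₁ (hf.mk f)
  have hfF : localNorm μ q B₁ f = F := localNorm_congr_ae hB₁ hf.ae_eq_mk
  have hF : Measurable F := measurable_localNorm hB₁ hf.stronglyMeasurable_mk
  rw [blockNorm_eq_eLpNorm_localNorm hp0, blockNorm_eq_eLpNorm_localNorm hp0, hfF]
  calc eLpNorm (localNorm μ q B₂ f) p μ
      ≤ eLpNorm (∑ x ∈ t, fun y => F (y * x)) p μ := by
        refine eLpNorm_mono_enorm fun y => ?_
        simpa only [enorm_eq_self, Finset.sum_apply, hfF]
          using localNorm_le_sum_of_subset_biUnion_smul hq hB₁ hcov hf y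
    _ ≤ ∑ x ∈ t, eLpNorm (fun y => F (y * x)) p μ :=
        eLpNorm_sum_le (fun x _ => (hF.comp (measurable_mul_const x)).aestronglyMeasurable) hp
    _ = (∑ x ∈ t, Measure.modularCharacterFun x ^ p.toReal⁻¹ : ℝ≥0) * eLpNorm F p μ := by
        simp only [eLpNorm_comp_mul_right, ENNReal.smul_def, smul_eq_mul, ← Finset.sum_mul,
          ENNReal.ofNNReal_finsetSum]

theorem exists_blockNorm_le [BorelSpace G] [LocallyCompactSpace G] [SigmaCompactSpace G]
    (μ : Measure G) [μ.IsHaarMeasure] (hq : 1 ≤ q) (hp : 1 ≤ p) (hB₁ : IsOpen B₁)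
    (hB₁_one : (1 : G) ∈ B₁) (hB₂ : IsCompact (closure B₂)) :
    ∃ C : ℝ≥0, ∀ f : G → E, AEStronglyMeasurable f μ →
      blockNorm μ q p B₂ f ≤ C * blockNorm μ q p B₁ f := by
  have : μ.Regular := Measure.regular_of_isHaarMeasure μ
  obtain ⟨t, ht⟩ := hB₂.elim_finite_subcover (fun x => x • B₁) (fun x => hB₁.smul x)
    fun x _ => mem_iUnion.2 ⟨x, by simpa using smul_mem_smul_set (a := x) hB₁_one⟩
  exact ⟨_, fun f hf => blockNorm_le_of_subset_biUnion_smul hq hp hB₁ (subset_closure.trans ht) hf⟩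

end BlockNorm

theorem statement2_general
    (μ : Measure G) [μ.IsHaarMeasure]
    (q p : ℝ≥0∞) (hq1 : 1 ≤ q) (hp1 : 1 ≤ p)
    (B₁ B₂ : Set G)
    (hB₁open : IsOpen B₁) (hB₁mem : (1 : G) ∈ B₁)
    (hB₁cpt : IsCompact (closure B₁))
    (hB₂open : IsOpen B₂) (hB₂mem : (1 : G) ∈ B₂)
    (hB₂cpt : IsCompact (closure B₂)) :
    (∃ C : ℝ≥0, 0 < C ∧ ∀ f : G → ℂ, AEStronglyMeasurable f μ →
        blockNorm μ q p B₂ f ≤ (C : ℝ≥0∞) * blockNorm μ q p B₁ f) ∧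
      ∀ f : G → ℂ, AEStronglyMeasurable f μ →
        (blockNorm μ q p B₁ f < ∞ ↔ blockNorm μ q p B₂ f < ∞) := by
  obtain ⟨C₂, hC₂⟩ := exists_blockNorm_le (E := ℂ) μ hq1 hp1 hB₁open hB₁mem hB₂cpt
  obtain ⟨C₁, hC₁⟩ := exists_blockNorm_le (E := ℂ) μ hq1 hp1 hB₂open hB₂mem hB₁cpt
  refine ⟨⟨C₂ + 1, by positivity, fun f hf => (hC₂ f hf).trans ?_⟩,
    fun f hf => ⟨fun h => ?_, fun h => ?_⟩⟩
  · gcongr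
    exact_mod_cast le_self_add
  · exact (hC₂ f hf).trans_lt (ENNReal.mul_lt_top ENNReal.coe_lt_top h)
  · exact (hC₁ f hf).trans_lt (ENNReal.mul_lt_top ENNReal.coe_lt_top h)

theorem statement2
    (μ : Measure G) [μ.IsHaarMeasure]
    (q p : ℝ≥0∞) (hq1 : 1 ≤ q) (hp1 : 1 ≤ p)
    (B₁ B₂ : Set G)
    (hB₁open : IsOpen B₁) (hB₁mem : (1 : G) ∈ B₁)
    (hB₁cpt : IsCompact (closure B₁)) (hB₁symm : B₁⁻¹ = B₁)
    (hB₂open : IsOpen B₂) (hB₂mem : (1 : G) ∈ B₂)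
    (hB₂cpt : IsCompact (closure B₂)) (hB₂symm : B₂⁻¹ = B₂) :
    (∃ C : ℝ≥0, 0 < C ∧ ∀ f : G → ℂ, AEStronglyMeasurable f μ →
        blockNorm μ q p B₂ f ≤ (C : ℝ≥0∞) * blockNorm μ q p B₁ f) ∧
      ∀ f : G → ℂ, AEStronglyMeasurable f μ →
        (blockNorm μ q p B₁ f < ∞ ↔ blockNorm μ q p B₂ f < ∞) :=
  statement2_general μ q p hq1 hp1 B₁ B₂ hB₁open hB₁mem hB₁cpt hB₂open hB₂mem hB₂cpt
end

section
/- Let p,q ∈ [1,∞], let B be an open, relatively compact, symmetric neighbourhood of e, and let π be a U–V uniform partition of G (for some open relatively compact neighbourhoods U,V of e with cl(U) ⊆ V). Then there exist constants C₁ = C₁(B,π,p,q) > 0 and C₂ = C₂(B,π,p,q) > 0 such that for every measurable function f on G: C₁ · _B‖f‖_{q,p} ≤ ‖f‖^π_{q,p} ≤ C₂ · _B‖f‖_{q,p}. -/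
/-!
Everything rests on bounded overlap: the pieces `E` whose centre `x_E` lies in a translate
`y • K` of a relatively compact set have pairwise disjoint subsets `x_E • U` inside
`y • (K * U)`, so there are at most `μ (K * U) / μ U` of them, uniformly in `y`.

Lower bound: a block `y • B` only meets pieces with `y ∈ x_E • (V * B)`, so `‖f χ_{yB}‖_q` is a
boundedly-many-term sum of the `‖f χ_E‖_q`; raise to the `p`-th power and integrate in `y`.
Upper bound: pick a closed neighbourhood `W` of `1` with `W⁻¹ * W ⊆ B` and finitely many `g`
with `V ⊆ ⋃ g • W`. Each piece is covered by the sets `x_E • g • W`, and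
`‖f χ_{zW}‖_q ≤ ‖f χ_{yB}‖_q` for every `y ∈ z • W`; averaging over `y ∈ x_E • g • W` and using
the bounded overlap of these sets bounds the sum over pieces by the integral over `y`.
-/

open MeasureTheory ENNReal NNReal Set Filter Topology Pointwise

variable {G : Type*} [Group G] [TopologicalSpace G] [IsTopologicalGroup G]
  [T2Space G] [LocallyCompactSpace G] [SigmaCompactSpace G]
  [MeasurableSpace G] [BorelSpace G]

section IndicatorNorm

variable {α E ι : Type*} [MeasurableSpace α] {μ : Measure α} [NormedAddCommGroup E]
  {q : ℝ≥0∞} {f : α → E}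

lemma eLpNorm_indicator_le_of_subset {s t : Set α} (h : s ⊆ t) :
    eLpNorm (s.indicator f) q μ ≤ eLpNorm (t.indicator f) q μ := by
  rw [← inter_eq_left.2 h, ← indicator_indicator]
  exact eLpNorm_indicator_le _

lemma eLpNorm_indicator_biUnion_le (hf : AEStronglyMeasurable f μ) (hq : 1 ≤ q)
    (s : Finset ι) {T : ι → Set α} (hT : ∀ i ∈ s, MeasurableSet (T i)) :
    eLpNorm ((⋃ i ∈ s, T i).indicator f) q μ ≤ ∑ i ∈ s, eLpNorm ((T i).indicator f) q μ := by
  classical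
  induction s using Finset.induction_on with
  | empty => simp
  | insert a s ha ih =>
    have hTs : ∀ i ∈ s, MeasurableSet (T i) := fun i hi => hT i (Finset.mem_insert_of_mem hi)
    have hTa := hT a (Finset.mem_insert_self a s)
    rw [Finset.sum_insert ha, Finset.set_biUnion_insert, ← union_sdiff_self,
      indicator_union_of_disjoint disjoint_sdiff_right]
    refine (eLpNorm_add_le (hf.indicator hTa)
      (hf.indicator ((Finset.measurableSet_biUnion s hTs).diff hTa)) hq).trans ?_
    gcongr
    exact (eLpNorm_indicator_le_of_subset sdiff_subset).trans (ih hTs)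

lemma eLpNorm_indicator_le_sum_of_subset_biUnion (hf : AEStronglyMeasurable f μ) (hq : 1 ≤ q)
    {s : Set α} (t : Finset ι) {T : ι → Set α} (hT : ∀ i ∈ t, MeasurableSet (T i))
    (hs : s ⊆ ⋃ i ∈ t, T i) :
    eLpNorm (s.indicator f) q μ ≤ ∑ i ∈ t, eLpNorm ((T i).indicator f) q μ :=
  (eLpNorm_indicator_le_of_subset hs).trans (eLpNorm_indicator_biUnion_le hf hq t hT)

end IndicatorNorm

section OverlapEstimates

variable {α ι : Type*} [MeasurableSpace α] {μ : Measure α}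

-- No measurability: `y ↦ ‖f χ_{y • B}‖_q` is not known to be measurable.
lemma tsum_lintegral_le_lintegral_tsum [Countable ι] (f : ι → α → ℝ≥0∞) :
    ∑' i, ∫⁻ a, f i a ∂μ ≤ ∫⁻ a, ∑' i, f i a ∂μ := by
  choose g hgm hgf hg using fun i => exists_measurable_le_lintegral_eq μ (f i)
  calc ∑' i, ∫⁻ a, f i a ∂μ = ∫⁻ a, ∑' i, g i a ∂μ := by
        rw [lintegral_tsum fun i => (hgm i).aemeasurable]; simp_rw [hg]
    _ ≤ ∫⁻ a, ∑' i, f i a ∂μ := lintegral_mono fun a => ENNReal.tsum_le_tsum fun i => hgf i a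

lemma le_essSup_of_forall_le_on {F : α → ℝ≥0∞} {b : ℝ≥0∞} {s : Set α} (hs : μ s ≠ 0)
    (h : ∀ y ∈ s, b ≤ F y) : b ≤ essSup F μ := by
  by_contra! hlt
  obtain ⟨y, hys, hy⟩ : ∃ y ∈ s, F y < b :=
    (frequently_ae_mem_iff.2 hs).and_eventually (ae_lt_of_essSup_lt hlt) |>.exists
  exact (h y hys).not_gt hy

lemma le_card_mul_essSup_of_le_sum {κ : Type*} {F : α → ℝ≥0∞} {a : ℝ≥0∞} {b : κ → ℝ≥0∞}
    (s : Finset κ) (ha : a ≤ ∑ g ∈ s, b g) {S : κ → Set α} (hS : ∀ g, μ (S g) ≠ 0)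
    (hb : ∀ g, ∀ y ∈ S g, b g ≤ F y) : a ≤ s.card * essSup F μ :=
  calc a ≤ ∑ g ∈ s, b g := ha
    _ ≤ ∑ _g ∈ s, essSup F μ := Finset.sum_le_sum fun g _ => le_essSup_of_forall_le_on (hS g) (hb g)
    _ = s.card * essSup F μ := by rw [Finset.sum_const, nsmul_eq_mul]

lemma lintegral_rpow_le_of_le_sum [Countable ι] {F : α → ℝ≥0∞} {a : ι → ℝ≥0∞}
    {S : ι → Set α} (hS : ∀ i, MeasurableSet (S i)) {c M : ℝ≥0∞} (hc : ∀ i, μ (S i) ≤ c)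
    {r : ℝ} (hr : 1 ≤ r)
    (hF : ∀ y, ∃ t : Finset ι, (t.card : ℝ≥0∞) ≤ M ∧ (∀ i ∈ t, y ∈ S i) ∧ F y ≤ ∑ i ∈ t, a i) :
    ∫⁻ y, F y ^ r ∂μ ≤ M ^ (r - 1) * c * ∑' i, a i ^ r := by
  have hpoint : ∀ y, F y ^ r ≤ ∑' i, (S i).indicator (fun _ => M ^ (r - 1) * a i ^ r) y := by
    intro y
    obtain ⟨t, htM, htS, hFt⟩ := hF y
    calc F y ^ r ≤ (∑ i ∈ t, a i) ^ r := by gcongr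
      _ ≤ (t.card : ℝ≥0∞) ^ (r - 1) * ∑ i ∈ t, a i ^ r :=
        ENNReal.rpow_sum_le_const_mul_sum_rpow t a hr
      _ ≤ ∑ i ∈ t, M ^ (r - 1) * a i ^ r := by
        rw [Finset.mul_sum]
        gcongr
      _ = ∑ i ∈ t, (S i).indicator (fun _ => M ^ (r - 1) * a i ^ r) y :=
        Finset.sum_congr rfl fun i hi => (indicator_of_mem (htS i hi) (fun _ => _)).symm
      _ ≤ _ := ENNReal.sum_le_tsum t
  calc ∫⁻ y, F y ^ r ∂μ
      ≤ ∫⁻ y, ∑' i, (S i).indicator (fun _ => M ^ (r - 1) * a i ^ r) y ∂μ := lintegral_mono hpoint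
    _ = ∑' i, M ^ (r - 1) * a i ^ r * μ (S i) := by
      rw [lintegral_tsum fun i => (measurable_const.indicator (hS i)).aemeasurable]
      simp_rw [lintegral_indicator_const (hS _)]
    _ ≤ ∑' i, M ^ (r - 1) * c * a i ^ r := by
      refine ENNReal.tsum_le_tsum fun i => ?_
      rw [mul_right_comm]
      gcongr
      exact hc i
    _ = M ^ (r - 1) * c * ∑' i, a i ^ r := ENNReal.tsum_mul_left

lemma mul_tsum_rpow_le_of_le_on [Countable ι] {F : α → ℝ≥0∞} {b : ι → ℝ≥0∞}
    {S : ι → Set α} (hS : ∀ i, MeasurableSet (S i)) {c N : ℝ≥0∞} (hc : ∀ i, c ≤ μ (S i))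
    (hN : ∀ y, ({i | y ∈ S i}.encard : ℝ≥0∞) ≤ N) (hN_top : N ≠ ∞) {r : ℝ} (hr : 0 ≤ r)
    (hb : ∀ i, ∀ y ∈ S i, b i ≤ F y) :
    c * ∑' i, b i ^ r ≤ N * ∫⁻ y, F y ^ r ∂μ := by
  calc c * ∑' i, b i ^ r ≤ ∑' i, ∫⁻ y, (S i).indicator (fun y => F y ^ r) y ∂μ := by
        rw [← ENNReal.tsum_mul_left]
        refine ENNReal.tsum_le_tsum fun i => ?_
        calc c * b i ^ r ≤ b i ^ r * μ (S i) := by rw [mul_comm]; gcongr; exact hc i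
          _ = ∫⁻ y in S i, b i ^ r ∂μ := (setLIntegral_const _ _).symm
          _ ≤ ∫⁻ y in S i, F y ^ r ∂μ := setLIntegral_mono_ae' (hS i) <|
              ae_of_all _ fun y hy => by gcongr; exact hb i y hy
          _ = ∫⁻ y, (S i).indicator (fun y => F y ^ r) y ∂μ := (lintegral_indicator (hS i) _).symm
    _ ≤ ∫⁻ y, ∑' i, (S i).indicator (fun y => F y ^ r) y ∂μ :=
        tsum_lintegral_le_lintegral_tsum _
    _ ≤ ∫⁻ y, N * F y ^ r ∂μ := by
        refine lintegral_mono fun y => ?_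
        have h : ∀ i,
            (S i).indicator (fun y => F y ^ r) y = {i | y ∈ S i}.indicator 1 i * F y ^ r :=
          fun i => by by_cases hy : y ∈ S i <;> simp [hy]
        simp_rw [h, ENNReal.tsum_mul_right, ← tsum_subtype, Pi.one_apply, ENNReal.tsum_set_one]
        gcongr
        exact hN y
    _ = N * ∫⁻ y, F y ^ r ∂μ := lintegral_const_mul' _ _ hN_top

lemma tsum_rpow_le_of_le_finsetSum {κ : Type*} {a : ι → ℝ≥0∞} {b : ι → κ → ℝ≥0∞}
    (s : Finset κ) (h : ∀ i, a i ≤ ∑ g ∈ s, b i g) {r : ℝ} (hr : 1 ≤ r) :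
    ∑' i, a i ^ r ≤ (s.card : ℝ≥0∞) ^ (r - 1) * ∑ g ∈ s, ∑' i, b i g ^ r := by
  calc ∑' i, a i ^ r ≤ ∑' i, (s.card : ℝ≥0∞) ^ (r - 1) * ∑ g ∈ s, b i g ^ r :=
        ENNReal.tsum_le_tsum fun i => (ENNReal.rpow_le_rpow (h i) (by linarith)).trans
          (ENNReal.rpow_sum_le_const_mul_sum_rpow s _ hr)
    _ = (s.card : ℝ≥0∞) ^ (r - 1) * ∑ g ∈ s, ∑' i, b i g ^ r := by
        rw [ENNReal.tsum_mul_left, Summable.tsum_finsetSum fun _ _ => ENNReal.summable]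

lemma tsum_rpow_le_mul_lintegral_rpow [Countable ι] {κ : Type*} {F : α → ℝ≥0∞}
    {a : ι → ℝ≥0∞} {b : ι → κ → ℝ≥0∞} (s : Finset κ) (ha : ∀ i, a i ≤ ∑ g ∈ s, b i g)
    {S : ι → κ → Set α} (hS : ∀ i g, MeasurableSet (S i g)) {c : ℝ≥0∞} (hc0 : c ≠ 0)
    (hc_top : c ≠ ∞) (hc : ∀ i g, c ≤ μ (S i g)) {N : κ → ℝ≥0∞}
    (hN : ∀ g y, ({i | y ∈ S i g}.encard : ℝ≥0∞) ≤ N g) (hN_top : ∀ g, N g ≠ ∞)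
    (hb : ∀ i g, ∀ y ∈ S i g, b i g ≤ F y) {r : ℝ} (hr : 1 ≤ r) :
    ∑' i, a i ^ r ≤ (s.card : ℝ≥0∞) ^ (r - 1) * (∑ g ∈ s, N g) / c * ∫⁻ y, F y ^ r ∂μ := by
  rw [← ENNReal.mul_div_right_comm, ENNReal.le_div_iff_mul_le (Or.inl hc0) (Or.inl hc_top),
    mul_comm]
  calc c * ∑' i, a i ^ r
      ≤ c * ((s.card : ℝ≥0∞) ^ (r - 1) * ∑ g ∈ s, ∑' i, b i g ^ r) := by
        gcongr
        exact tsum_rpow_le_of_le_finsetSum s ha hr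
    _ = (s.card : ℝ≥0∞) ^ (r - 1) * ∑ g ∈ s, c * ∑' i, b i g ^ r := by
        rw [mul_left_comm, Finset.mul_sum]
    _ ≤ (s.card : ℝ≥0∞) ^ (r - 1) * ∑ g ∈ s, N g * ∫⁻ y, F y ^ r ∂μ :=
        mul_le_mul_right (Finset.sum_le_sum fun g _ => mul_tsum_rpow_le_of_le_on
          (fun i => hS i g) (fun i => hc i g) (hN g) (hN_top g) (by linarith) fun i => hb i g) _
    _ = (s.card : ℝ≥0∞) ^ (r - 1) * (∑ g ∈ s, N g) * ∫⁻ y, F y ^ r ∂μ := by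
        rw [← Finset.sum_mul, mul_assoc]

end OverlapEstimates

section UniformPartition

open Function

variable {G : Type*} [Group G]

lemma smul_subset_smul_of_mem_smul {W B : Set G} (hWB : W⁻¹ * W ⊆ B) {y z : G}
    (hy : y ∈ z • W) : z • W ⊆ y • B := by
  obtain ⟨w, hw, rfl⟩ := hy
  rintro _ ⟨w', hw', rfl⟩
  exact ⟨w⁻¹ * w', hWB (Set.mul_mem_mul (inv_mem_inv.2 hw) hw'), by simp [mul_assoc]⟩

lemma smul_subset_biUnion_of_mem_smul_mul {ι : Type*} {P : ι → Set G} {x : ι → G} {V B : Set G}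
    (hP : ⋃ i, P i = univ) (hPV : ∀ i, P i ⊆ x i • V) (hB : B⁻¹ = B) (y : G) :
    y • B ⊆ ⋃ i ∈ {i | y ∈ x i • (V * B)}, P i := by
  rintro _ ⟨b, hb, rfl⟩
  obtain ⟨i, hi⟩ := mem_iUnion.1 (hP ▸ mem_univ (y • b))
  obtain ⟨v, hv, hvy⟩ := hPV i hi
  refine mem_biUnion (x := i) ⟨v * b⁻¹, Set.mul_mem_mul hv (hB ▸ inv_mem_inv.2 hb), ?_⟩ hi
  simp only [smul_eq_mul] at hvy ⊢
  rw [← mul_assoc, hvy, mul_inv_cancel_right]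

variable [MeasurableSpace G]

lemma IsUniformPartition.exists_centers {π : Set (Set G)} {U V : Set G}
    (hπ : IsUniformPartition π U V) :
    ∃ x : π → G, Pairwise (Disjoint on fun A => x A • U) ∧ ∀ A : π, (A : Set G) ⊆ x A • V := by
  choose x _ hxU hxV using fun A : π => hπ.2.2.2.2 A A.2
  exact ⟨x, fun A A' hAA' => (hπ.2.2.1 A.2 A'.2 (Subtype.coe_injective.ne hAA')).mono
    (hxU A) (hxU A'), hxV⟩

lemma exists_finset_eLpNorm_indicator_smul_le {E : Type*} [NormedAddCommGroup E] {q : ℝ≥0∞}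
    {μ : Measure G} {f : G → E} (hq : 1 ≤ q) (hf : AEStronglyMeasurable f μ)
    {π : Set (Set G)} {U V B : Set G} (hπ : IsUniformPartition π U V) {x : π → G}
    (hxV : ∀ A : π, (A : Set G) ⊆ x A • V) (hB : B⁻¹ = B) {M : ℝ≥0∞} (hM : M ≠ ∞) {y : G}
    (hcard : ({A | y ∈ x A • (V * B)}.encard : ℝ≥0∞) ≤ M) :
    ∃ t : Finset π, (t.card : ℝ≥0∞) ≤ M ∧ (∀ A ∈ t, y ∈ x A • (V * B)) ∧
      eLpNorm ((y • B).indicator f) q μ ≤ ∑ A ∈ t, eLpNorm ((A : Set G).indicator f) q μ := by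
  have hfin : {A | y ∈ x A • (V * B)}.Finite :=
    Set.encard_ne_top_iff.1 (ENat.toENNReal_ne_top.1 (ne_top_of_le_ne_top hM hcard))
  refine ⟨hfin.toFinset, ?_, fun A hA => hfin.mem_toFinset.1 hA,
    eLpNorm_indicator_le_sum_of_subset_biUnion hf hq _ (fun A _ => hπ.2.1 A A.2) ?_⟩
  · rwa [hfin.encard_eq_coe_toFinset_card, ENat.toENNReal_coe] at hcard
  · simpa using smul_subset_biUnion_of_mem_smul_mul (P := fun A : π => (A : Set G))
      (by simpa [sUnion_eq_iUnion] using hπ.2.2.2.1) hxV hB y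

variable [MeasurableMul G] {μ : Measure G} [μ.IsMulLeftInvariant]

lemma encard_setOf_mem_smul_le {ι : Type*} [Countable ι] {x : ι → G} {U : Set G}
    (hU : MeasurableSet U) (hU0 : μ U ≠ 0) (hU_top : μ U ≠ ∞)
    (hd : Pairwise (Disjoint on fun i => x i • U)) (L : Set G) (y : G) :
    ({i | y ∈ x i • L}.encard : ℝ≥0∞) ≤ μ (L⁻¹ * U) / μ U := by
  set s := {i | y ∈ x i • L}
  have hsub : (⋃ i : s, x i • U) ⊆ y • (L⁻¹ * U) := by
    simp only [iUnion_subset_iff]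
    rintro ⟨i, l, hl, hli⟩ _ ⟨u, hu, rfl⟩
    refine ⟨l⁻¹ * u, Set.mul_mem_mul (inv_mem_inv.2 hl) hu, ?_⟩
    simp only [smul_eq_mul] at hli ⊢
    rw [← hli]; group
  rw [ENNReal.le_div_iff_mul_le (Or.inl hU0) (Or.inl hU_top)]
  calc (s.encard : ℝ≥0∞) * μ U = ∑' i : s, μ (x i • U) := by
        simp only [measure_smul, ENNReal.tsum_set_const]
    _ = μ (⋃ i : s, x i • U) :=
        (measure_iUnion (f := fun i : s => x i • U)
          (fun i j hij => hd (Subtype.coe_injective.ne hij)) fun i => hU.const_smul _).symm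
    _ ≤ μ (L⁻¹ * U) := (measure_mono hsub).trans_eq (measure_smul μ y _)

end UniformPartition

section Comparison

open Function

variable {G : Type*} [Group G] [TopologicalSpace G] [IsTopologicalGroup G]

lemma exists_nhds_one_inv_mul_subset_and_finite_cover {B V : Set G} (hB : B ∈ 𝓝 1)
    (hBc : IsCompact (closure B)) (hVc : IsCompact (closure V)) :
    ∃ W ∈ 𝓝 (1 : G), IsClosed W ∧ IsCompact W ∧ W⁻¹ * W ⊆ B ∧
      ∃ s : Finset G, V ⊆ ⋃ g ∈ s, g • W := by
  obtain ⟨W, hW1, hWc, hWsymm, hWB⟩ := exists_closed_nhds_one_inv_eq_mul_subset hB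
  have hW_cpt : IsCompact W := hBc.of_isClosed_subset hWc
    (fun w hw => subset_closure (hWB ⟨1, mem_of_mem_nhds hW1, w, hw, one_mul w⟩))
  obtain ⟨s, -, hs⟩ := hVc.elim_nhds_subcover (fun g => g • W)
    fun g _ => by simpa using (smul_mem_nhds_smul_iff g).2 hW1
  exact ⟨W, hW1, hWc, hW_cpt, by rwa [hWsymm], s, subset_closure.trans hs⟩

variable [MeasurableSpace G] {μ : Measure G}

lemma measure_inv_mul_ne_top [IsFiniteMeasureOnCompacts μ] {L U : Set G}
    (hL : IsCompact (closure L)) (hU : IsCompact (closure U)) : μ (L⁻¹ * U) ≠ ∞ :=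
  ((measure_mono (Set.mul_subset_mul (inv_subset_inv.2 subset_closure) subset_closure)).trans_lt
    (hL.inv.mul hU).measure_lt_top).ne

variable [BorelSpace G]

lemma exists_encard_setOf_mem_smul_le (μ : Measure G) [μ.IsHaarMeasure] {ι : Type*}
    [Countable ι] {x : ι → G} {U L : Set G} (hU : IsOpen U) (hU1 : (1 : G) ∈ U)
    (hUc : IsCompact (closure U)) (hd : Pairwise (Disjoint on fun i => x i • U))
    (hL : IsCompact (closure L)) :
    ∃ N : ℝ≥0∞, N ≠ ∞ ∧ ∀ y, ({i | y ∈ x i • L}.encard : ℝ≥0∞) ≤ N := by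
  have hU0 : μ U ≠ 0 := hU.measure_ne_zero μ ⟨1, hU1⟩
  exact ⟨_, ENNReal.div_ne_top (measure_inv_mul_ne_top hL hUc) hU0,
    encard_setOf_mem_smul_le hU.measurableSet hU0
      ((measure_mono subset_closure).trans_lt hUc.measure_lt_top).ne hd L⟩

variable [μ.IsHaarMeasure] {E : Type*} [NormedAddCommGroup E] {q p : ℝ≥0∞} {B U V : Set G}
  {π : Set (Set G)}

theorem blockNorm_le_mul_partNorm (hq : 1 ≤ q) (hp : 1 ≤ p) (hBo : IsOpen B)
    (hBc : IsCompact (closure B)) (hBsymm : B⁻¹ = B) (hUo : IsOpen U) (hU1 : (1 : G) ∈ U)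
    (hUc : IsCompact (closure U)) (hVc : IsCompact (closure V)) (hπ : IsUniformPartition π U V) :
    ∃ D : ℝ≥0∞, D ≠ ∞ ∧ ∀ f : G → E, AEStronglyMeasurable f μ →
      blockNorm μ q p B f ≤ D * partNorm μ q p π f := by
  obtain ⟨x, hxU, hxV⟩ := hπ.exists_centers
  have : Countable π := hπ.1.to_subtype
  have hVBc : IsCompact (closure (V * B)) :=
    (hVc.mul hBc).closure_of_subset (Set.mul_subset_mul subset_closure subset_closure)
  obtain ⟨M, hM, hcard⟩ := exists_encard_setOf_mem_smul_le μ hUo hU1 hUc hxU hVBc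
  have hcover := fun f (hf : AEStronglyMeasurable f μ) y =>
    exists_finset_eLpNorm_indicator_smul_le (E := E) hq hf hπ hxV hBsymm hM (hcard y)
  rcases eq_or_ne p ∞ with rfl | hp_top
  · refine ⟨M, hM, fun f hf => ?_⟩
    simp only [blockNorm, partNorm, if_true]
    refine essSup_le_of_ae_le _ (ae_of_all _ fun y => ?_)
    obtain ⟨t, htM, -, hFt⟩ := hcover f hf y
    calc eLpNorm ((y • B).indicator f) q μ ≤ ∑ A ∈ t, eLpNorm ((A : Set G).indicator f) q μ := hFt
      _ ≤ ∑ _A ∈ t, ⨆ A ∈ π, eLpNorm (A.indicator f) q μ :=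
        Finset.sum_le_sum fun A _ => le_iSup₂_of_le (A : Set G) A.2 le_rfl
      _ ≤ M * ⨆ A ∈ π, eLpNorm (A.indicator f) q μ := by
        rw [Finset.sum_const, nsmul_eq_mul]
        gcongr
  · have hr : 1 ≤ p.toReal := ENNReal.toReal_one ▸ ENNReal.toReal_mono hp_top hp
    have hVB_top : μ (V * B) ≠ ∞ :=
      ((measure_mono subset_closure).trans_lt hVBc.measure_lt_top).ne
    refine ⟨(M ^ (p.toReal - 1) * μ (V * B)) ^ (1 / p.toReal), ?_, fun f hf => ?_⟩
    · exact ENNReal.rpow_ne_top_of_nonneg (by positivity) (ENNReal.mul_ne_top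
        (ENNReal.rpow_ne_top_of_nonneg (by linarith) hM) hVB_top)
    simp only [blockNorm, partNorm, if_neg hp_top]
    rw [← ENNReal.mul_rpow_of_nonneg _ _ (by positivity)]
    gcongr
    exact lintegral_rpow_le_of_le_sum (S := fun A : π => x A • (V * B))
      (fun A => (hBo.mul_left.smul _).measurableSet) (fun A => (measure_smul μ _ _).le) hr
      (hcover f hf)

theorem partNorm_le_mul_blockNorm (hq : 1 ≤ q) (hp : 1 ≤ p) (hBo : IsOpen B) (hB1 : (1 : G) ∈ B)
    (hBc : IsCompact (closure B)) (hUo : IsOpen U) (hU1 : (1 : G) ∈ U)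
    (hUc : IsCompact (closure U)) (hVc : IsCompact (closure V)) (hπ : IsUniformPartition π U V) :
    ∃ D : ℝ≥0∞, D ≠ ∞ ∧ ∀ f : G → E, AEStronglyMeasurable f μ →
      partNorm μ q p π f ≤ D * blockNorm μ q p B f := by
  obtain ⟨x, hxU, hxV⟩ := hπ.exists_centers
  have : Countable π := hπ.1.to_subtype
  obtain ⟨W, hW1, hWc, hW_cpt, hWB, s, hs⟩ :=
    exists_nhds_one_inv_mul_subset_and_finite_cover (hBo.mem_nhds hB1) hBc hVc
  have hW0 : μ W ≠ 0 := (μ.measure_pos_of_mem_nhds hW1).ne'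
  choose N hN hoverlap using fun g : G => exists_encard_setOf_mem_smul_le μ hUo hU1 hUc
    hxU ((hW_cpt.smul g).closure_of_subset subset_rfl)
  have hsplit : ∀ f : G → E, AEStronglyMeasurable f μ → ∀ A : π,
      eLpNorm ((A : Set G).indicator f) q μ ≤ ∑ g ∈ s, eLpNorm ((x A • g • W).indicator f) q μ :=
    fun f hf A => eLpNorm_indicator_le_sum_of_subset_biUnion hf hq s
      (fun g _ => (hWc.measurableSet.const_smul g).const_smul _) <|
        (hxV A).trans <| (smul_set_mono hs).trans_eq (smul_set_iUnion₂ _ _)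
  have hlocal : ∀ (f : G → E) (a g y : G), y ∈ a • g • W →
      eLpNorm ((a • g • W).indicator f) q μ ≤ eLpNorm ((y • B).indicator f) q μ := by
    intro f a g y hy
    rw [← mul_smul] at hy ⊢
    exact eLpNorm_indicator_le_of_subset (smul_subset_smul_of_mem_smul hWB hy)
  rcases eq_or_ne p ∞ with rfl | hp_top
  · refine ⟨s.card, ENNReal.natCast_ne_top _, fun f hf => ?_⟩
    simp only [blockNorm, partNorm, if_true]
    exact iSup₂_le fun A hA => le_card_mul_essSup_of_le_sum s (hsplit f hf ⟨A, hA⟩)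
      (S := fun g => x ⟨A, hA⟩ • g • W) (fun g => by rwa [measure_smul, measure_smul])
      (hlocal f _)
  · have hr : 1 ≤ p.toReal := ENNReal.toReal_one ▸ ENNReal.toReal_mono hp_top hp
    set K := (s.card : ℝ≥0∞) ^ (p.toReal - 1) * (∑ g ∈ s, N g) / μ W
    have hK : K ≠ ∞ := ENNReal.div_ne_top (ENNReal.mul_ne_top
      (ENNReal.rpow_ne_top_of_nonneg (by linarith) (ENNReal.natCast_ne_top _))
      (ENNReal.sum_ne_top.2 fun g _ => hN g)) hW0
    refine ⟨K ^ (1 / p.toReal), ENNReal.rpow_ne_top_of_nonneg (by positivity) hK, fun f hf => ?_⟩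
    simp only [blockNorm, partNorm, if_neg hp_top]
    rw [← ENNReal.mul_rpow_of_nonneg _ _ (by positivity)]
    gcongr
    exact tsum_rpow_le_mul_lintegral_rpow s (hsplit f hf)
      (fun A g => (hWc.measurableSet.const_smul g).const_smul (x A)) hW0
      hW_cpt.measure_lt_top.ne (fun A g => by rw [measure_smul, measure_smul]) hoverlap hN
      (fun A => hlocal f (x A)) hr

end Comparison

theorem statement3_general
    (μ : Measure G) [μ.IsHaarMeasure]
    (q p : ℝ≥0∞) (hq1 : 1 ≤ q) (hp1 : 1 ≤ p)
    (B : Set G) (hBopen : IsOpen B) (hBmem : (1 : G) ∈ B)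
    (hBcpt : IsCompact (closure B)) (hBsymm : B⁻¹ = B)
    (U V : Set G) (hUopen : IsOpen U) (hUmem : (1 : G) ∈ U) (hUcpt : IsCompact (closure U))
    (hVcpt : IsCompact (closure V))
    (π : Set (Set G)) (hπ : IsUniformPartition π U V) :
    ∃ C₁ C₂ : ℝ≥0, 0 < C₁ ∧ 0 < C₂ ∧ ∀ f : G → ℂ, AEStronglyMeasurable f μ →
      (C₁ : ℝ≥0∞) * blockNorm μ q p B f ≤ partNorm μ q p π f ∧
        partNorm μ q p π f ≤ (C₂ : ℝ≥0∞) * blockNorm μ q p B f := by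
  obtain ⟨D₁, hD₁, hlower⟩ := blockNorm_le_mul_partNorm (μ := μ) (E := ℂ) hq1 hp1 hBopen hBcpt
    hBsymm hUopen hUmem hUcpt hVcpt hπ
  obtain ⟨D₂, hD₂, hupper⟩ := partNorm_le_mul_blockNorm (μ := μ) (E := ℂ) hq1 hp1 hBopen hBmem
    hBcpt hUopen hUmem hUcpt hVcpt hπ
  lift D₁ to ℝ≥0 using hD₁
  lift D₂ to ℝ≥0 using hD₂
  refine ⟨(D₁ + 1)⁻¹, D₂ + 1, by positivity, by positivity, fun f hf => ⟨?_, ?_⟩⟩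
  · rw [ENNReal.coe_inv (by positivity), ← ENNReal.div_eq_inv_mul,
      ENNReal.div_le_iff (by simp) (by simp), mul_comm]
    exact (hlower f hf).trans (by gcongr; simp)
  · exact (hupper f hf).trans (by gcongr; simp)

theorem statement3
    (μ : Measure G) [μ.IsHaarMeasure]
    (q p : ℝ≥0∞) (hq1 : 1 ≤ q) (hp1 : 1 ≤ p)
    (B : Set G) (hBopen : IsOpen B) (hBmem : (1 : G) ∈ B)
    (hBcpt : IsCompact (closure B)) (hBsymm : B⁻¹ = B)
    (U V : Set G) (hUopen : IsOpen U) (hUmem : (1 : G) ∈ U) (hUcpt : IsCompact (closure U))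
    (hVopen : IsOpen V) (hVmem : (1 : G) ∈ V) (hVcpt : IsCompact (closure V))
    (hUV : closure U ⊆ V)
    (π : Set (Set G)) (hπ : IsUniformPartition π U V) :
    ∃ C₁ C₂ : ℝ≥0, 0 < C₁ ∧ 0 < C₂ ∧ ∀ f : G → ℂ, AEStronglyMeasurable f μ →
      (C₁ : ℝ≥0∞) * blockNorm μ q p B f ≤ partNorm μ q p π f ∧
        partNorm μ q p π f ≤ (C₂ : ℝ≥0∞) * blockNorm μ q p B f :=
  statement3_general μ q p hq1 hp1 B hBopen hBmem hBcpt hBsymm U V hUopen hUmem hUcpt hVcpt π hπ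
end

section
/- For every (α,p,q) ∈ [1,∞]³, the set (L^q,L^p)^α(G) is a complex vector subspace of the space of measurable functions (mod λ-a.e. equality), the map f ↦ ‖f‖_{q,p,α} is a norm on it, and (L^q,L^p)^α(G) equipped with this norm is a complex Banach space (i.e. it is complete). -/
open MeasureTheory ENNReal NNReal Set Filter Topology Pointwise

variable {G : Type*} [Group G] [TopologicalSpace G] [IsTopologicalGroup G]
  [T2Space G] [LocallyCompactSpace G] [SigmaCompactSpace G]
  [MeasurableSpace G] [BorelSpace G]

/-! On a single piece of a partition the norm is an `L^q` norm, and the pieces are combined by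
the `ℓ^p` norm of the resulting family; both are norms satisfying Fatou's lemma, hence so is
`‖·‖_{q,p,α}`, a supremum of weighted such norms. Completeness is the Riesz–Fischer argument: a
fast Cauchy subsequence is Cauchy in `L^q` on every piece of the countable partition `π_1`, so it
converges a.e., and Fatou's lemma turns the Cauchy bounds into convergence for `‖·‖_{q,p,α}`.
The weight at `r = 1` is `λ(B(e,1)) = 1`, which makes the norm dominate the local `L^q` norms. -/

namespace ENNReal

theorem Lp_add_le_tsum {ι : Type*} (u v : ι → ℝ≥0∞) {t : ℝ} (ht : 1 ≤ t) :
    (∑' i, (u i + v i) ^ t) ^ (1 / t) ≤ (∑' i, u i ^ t) ^ (1 / t) + (∑' i, v i ^ t) ^ (1 / t) := by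
  rw [ENNReal.tsum_eq_iSup_sum, ← orderIsoRpow_apply _ (by positivity), OrderIso.map_iSup]
  refine iSup_le fun s => (Lp_add_le s u v ht).trans (add_le_add ?_ ?_) <;>
    exact rpow_le_rpow (ENNReal.sum_le_tsum s) (by positivity)

theorem tsum_liminf_le {ι : Type*} (u : ℕ → ι → ℝ≥0∞) :
    ∑' i, liminf (fun k => u k i) atTop ≤ liminf (fun k => ∑' i, u k i) atTop := by
  let _ : MeasurableSpace ι := ⊤
  have : MeasurableSingletonClass ι := ⟨fun _ => trivial⟩
  simpa only [lintegral_count] using lintegral_liminf_le' (μ := (Measure.count : Measure ι))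
    fun k => (measurable_from_top (f := u k)).aemeasurable

end ENNReal

noncomputable def ellpNorm {ι : Type*} (p : ℝ≥0∞) (a : ι → ℝ≥0∞) : ℝ≥0∞ :=
  if p = ∞ then ⨆ i, a i else (∑' i, a i ^ p.toReal) ^ (1 / p.toReal)

section ellpNorm

variable {ι : Type*} {p : ℝ≥0∞} {a b : ι → ℝ≥0∞}

lemma le_ellpNorm (hp : p ≠ 0) (a : ι → ℝ≥0∞) (i : ι) : a i ≤ ellpNorm p a := by
  unfold ellpNorm
  split_ifs with hp_top
  · exact le_iSup a i
  · have ht : p.toReal ≠ 0 := (ENNReal.toReal_pos hp hp_top).ne'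
    calc a i = (a i ^ p.toReal) ^ (1 / p.toReal) := by rw [one_div, ENNReal.rpow_rpow_inv ht]
      _ ≤ _ := ENNReal.rpow_le_rpow (ENNReal.le_tsum i) (by positivity)

lemma ellpNorm_mono (h : ∀ i, a i ≤ b i) : ellpNorm p a ≤ ellpNorm p b := by
  unfold ellpNorm
  split_ifs
  · exact iSup_mono h
  · gcongr with i
    exact h i

lemma ellpNorm_add_le (hp : 1 ≤ p) (a b : ι → ℝ≥0∞) :
    ellpNorm p (a + b) ≤ ellpNorm p a + ellpNorm p b := by
  unfold ellpNorm
  split_ifs with hp_top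
  · exact iSup_le fun i => add_le_add (le_iSup a i) (le_iSup b i)
  · exact ENNReal.Lp_add_le_tsum a b (ENNReal.toReal_mono hp_top hp)

lemma ellpNorm_const_mul (hp : p ≠ 0) (c : ℝ≥0∞) (a : ι → ℝ≥0∞) :
    ellpNorm p (fun i => c * a i) = c * ellpNorm p a := by
  unfold ellpNorm
  split_ifs with hp_top
  · exact (ENNReal.mul_iSup ..).symm
  · have ht : 0 < p.toReal := ENNReal.toReal_pos hp hp_top
    simp_rw [ENNReal.mul_rpow_of_nonneg _ _ ht.le, ENNReal.tsum_mul_left,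
      ENNReal.mul_rpow_of_nonneg _ _ (by positivity : 0 ≤ 1 / p.toReal), one_div,
      ENNReal.rpow_rpow_inv ht.ne']

lemma ellpNorm_zero (hp : p ≠ 0) : ellpNorm p (fun _ : ι => 0) = 0 := by
  simpa using ellpNorm_const_mul hp 0 (fun _ : ι => 0)

lemma ellpNorm_liminf_le (hp : p ≠ 0) (a : ℕ → ι → ℝ≥0∞) :
    ellpNorm p (fun i => liminf (fun k => a k i) atTop) ≤
      liminf (fun k => ellpNorm p (a k)) atTop := by
  unfold ellpNorm
  split_ifs with hp_top
  · exact iSup_le fun i => liminf_le_liminf (.of_forall fun k => le_iSup (a k) i)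
  · have ht : 0 < p.toReal := ENNReal.toReal_pos hp hp_top
    have hpow (s : ℝ) (hs : 0 < s) (u : ℕ → ℝ≥0∞) :
        liminf u atTop ^ s = liminf (fun k => u k ^ s) atTop :=
      (ENNReal.orderIsoRpow s hs).liminf_apply
    simp_rw [hpow _ ht, ← hpow _ (one_div_pos.2 ht)]
    exact ENNReal.rpow_le_rpow (ENNReal.tsum_liminf_le _) (by positivity)

end ellpNorm

lemma ae_of_forall_ae_restrict_of_sUnion_eq_univ {X : Type*} [MeasurableSpace X] {μ : Measure X}
    {π : Set (Set X)} {P : X → Prop} (hcount : π.Countable) (hcover : ⋃₀ π = univ)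
    (h : ∀ A ∈ π, ∀ᵐ x ∂μ.restrict A, P x) : ∀ᵐ x ∂μ, P x := by
  rw [← Measure.restrict_univ (μ := μ), ← hcover, sUnion_eq_biUnion]
  exact (ae_restrict_biUnion_iff _ hcount P).2 h

section partNorm

variable {X E : Type*} [MeasurableSpace X] [NormedAddCommGroup E]
  {μ : Measure X} {q p : ℝ≥0∞} {π : Set (Set X)} {f g : X → E}

lemma partNorm_eq_ellpNorm (f : X → E) :
    partNorm μ q p π f = ellpNorm p (fun A : π => eLpNorm ((A : Set X).indicator f) q μ) := by
  unfold partNorm ellpNorm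
  split_ifs
  · exact (iSup_subtype'' π _).symm
  · rfl

lemma eLpNorm_indicator_le_partNorm (hp : p ≠ 0) {A : Set X} (hA : A ∈ π) (f : X → E) :
    eLpNorm (A.indicator f) q μ ≤ partNorm μ q p π f := by
  rw [partNorm_eq_ellpNorm]
  exact le_ellpNorm hp (fun A : π => eLpNorm ((A : Set X).indicator f) q μ) ⟨A, hA⟩

lemma partNorm_add_le (hq : 1 ≤ q) (hp : 1 ≤ p) (hπ : ∀ A ∈ π, MeasurableSet A)
    (hf : AEStronglyMeasurable f μ) (hg : AEStronglyMeasurable g μ) :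
    partNorm μ q p π (f + g) ≤ partNorm μ q p π f + partNorm μ q p π g := by
  simp only [partNorm_eq_ellpNorm]
  refine (ellpNorm_mono fun A => ?_).trans (ellpNorm_add_le hp _ _)
  rw [indicator_add']
  exact eLpNorm_add_le (hf.indicator (hπ A A.2)) (hg.indicator (hπ A A.2)) hq

lemma partNorm_const_smul {𝕜 : Type*} [NormedDivisionRing 𝕜] [Module 𝕜 E] [NormSMulClass 𝕜 E]
    (hp : p ≠ 0) (c : 𝕜) (f : X → E) :
    partNorm μ q p π (c • f) = ‖c‖ₑ * partNorm μ q p π f := by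
  have h (A : Set X) : eLpNorm (A.indicator (c • f)) q μ = ‖c‖ₑ * eLpNorm (A.indicator f) q μ :=
    (congrArg (eLpNorm · q μ) (indicator_const_smul A c f)).trans (eLpNorm_const_smul c _ q μ)
  simp only [partNorm_eq_ellpNorm, h]
  exact ellpNorm_const_mul hp _ _

lemma partNorm_neg (f : X → E) : partNorm μ q p π (-f) = partNorm μ q p π f := by
  simp only [partNorm_eq_ellpNorm, indicator_neg', eLpNorm_neg]

lemma partNorm_congr_ae (h : f =ᵐ[μ] g) : partNorm μ q p π f = partNorm μ q p π g := by
  simp only [partNorm_eq_ellpNorm, eLpNorm_congr_ae h.indicator]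

lemma partNorm_zero (hp : p ≠ 0) : partNorm μ q p π (0 : X → E) = 0 := by
  simpa only [partNorm_eq_ellpNorm, indicator_zero', eLpNorm_zero] using ellpNorm_zero hp

lemma ae_eq_zero_of_partNorm_eq_zero (hp : p ≠ 0) (hq : q ≠ 0) (hπ : ∀ A ∈ π, MeasurableSet A)
    (hcount : π.Countable) (hcover : ⋃₀ π = univ) (hf : AEStronglyMeasurable f μ)
    (h : partNorm μ q p π f = 0) : f =ᵐ[μ] 0 := by
  refine ae_of_forall_ae_restrict_of_sUnion_eq_univ hcount hcover fun A hA => ?_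
  have hA : eLpNorm f q (μ.restrict A) = 0 := by
    rw [← eLpNorm_indicator_eq_eLpNorm_restrict (hπ A hA), ← nonpos_iff_eq_zero, ← h]
    exact eLpNorm_indicator_le_partNorm hp hA f
  exact (eLpNorm_eq_zero_iff hf.restrict hq).1 hA

lemma partNorm_le_liminf (hp : p ≠ 0) (hπ : ∀ A ∈ π, MeasurableSet A) {F : ℕ → X → E}
    (hF : ∀ n, AEStronglyMeasurable (F n) μ)
    (hlim : ∀ᵐ x ∂μ, Tendsto (fun n => F n x) atTop (𝓝 (f x))) :
    partNorm μ q p π f ≤ liminf (fun n => partNorm μ q p π (F n)) atTop := by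
  simp only [partNorm_eq_ellpNorm]
  refine (ellpNorm_mono fun A => ?_).trans (ellpNorm_liminf_le hp _)
  simp_rw [eLpNorm_indicator_eq_eLpNorm_restrict (hπ A A.2)]
  exact Lp.eLpNorm_lim_le_liminf_eLpNorm (fun n => (hF n).restrict) f (ae_restrict_of_ae hlim)

lemma ae_exists_tendsto_of_partNorm_cauchy [CompleteSpace E] (hq : 1 ≤ q) (hp : p ≠ 0)
    (hπ : ∀ A ∈ π, MeasurableSet A) (hcount : π.Countable) (hcover : ⋃₀ π = univ)
    {F : ℕ → X → E} (hF : ∀ n, AEStronglyMeasurable (F n) μ) {B : ℕ → ℝ≥0∞}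
    (hB : ∑' i, B i ≠ ∞) (hcau : ∀ N n m, N ≤ n → N ≤ m → partNorm μ q p π (F n - F m) < B N) :
    ∀ᵐ x ∂μ, ∃ l, Tendsto (fun n => F n x) atTop (𝓝 l) :=
  ae_of_forall_ae_restrict_of_sUnion_eq_univ hcount hcover fun A hA =>
    Lp.ae_tendsto_of_cauchy_eLpNorm (fun n => (hF n).restrict) hq hB fun N n m hn hm =>
      (eLpNorm_indicator_eq_eLpNorm_restrict (hπ A hA)).symm.trans_lt
        ((eLpNorm_indicator_le_partNorm hp hA _).trans_lt (hcau N n m hn hm))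

end partNorm

section alphaNorm

variable {X E : Type*} [Group X] [MeasurableSpace X] [NormedAddCommGroup E]
  {μ : Measure X} {nm : X → ℝ} {πr : ℝ → Set (Set X)} {q p α : ℝ≥0∞} {f g : X → E}

lemma le_alphaNorm {r : ℝ} (hr : 0 < r) (f : X → E) :
    μ (gball nm 1 r) ^ (α⁻¹.toReal - q⁻¹.toReal) * partNorm μ q p (πr r) f ≤
      alphaNorm μ nm πr q p α f :=
  le_iSup₂ (f := fun r (_ : 0 < r) =>
    μ (gball nm 1 r) ^ (α⁻¹.toReal - q⁻¹.toReal) * partNorm μ q p (πr r) f) r hr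

lemma partNorm_one_le_alphaNorm (h1 : μ (gball nm 1 1) = 1) (f : X → E) :
    partNorm μ q p (πr 1) f ≤ alphaNorm μ nm πr q p α f := by
  simpa [h1] using le_alphaNorm (μ := μ) (nm := nm) (πr := πr) (q := q) (p := p) (α := α) one_pos f

lemma alphaNorm_add_le (hq : 1 ≤ q) (hp : 1 ≤ p)
    (hπ : ∀ r, 0 < r → ∀ A ∈ πr r, MeasurableSet A)
    (hf : AEStronglyMeasurable f μ) (hg : AEStronglyMeasurable g μ) :
    alphaNorm μ nm πr q p α (f + g) ≤ alphaNorm μ nm πr q p α f + alphaNorm μ nm πr q p α g :=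
  iSup₂_le fun r hr => calc
    _ ≤ μ (gball nm 1 r) ^ (α⁻¹.toReal - q⁻¹.toReal) *
          (partNorm μ q p (πr r) f + partNorm μ q p (πr r) g) :=
      mul_le_mul_right (partNorm_add_le hq hp (hπ r hr) hf hg) _
    _ ≤ _ := (mul_add _ _ _).trans_le (add_le_add (le_alphaNorm hr f) (le_alphaNorm hr g))

lemma alphaNorm_const_smul {𝕜 : Type*} [NormedDivisionRing 𝕜] [Module 𝕜 E] [NormSMulClass 𝕜 E]
    (hp : p ≠ 0) (c : 𝕜) (f : X → E) :
    alphaNorm μ nm πr q p α (c • f) = ‖c‖ₑ * alphaNorm μ nm πr q p α f := by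
  simp_rw [alphaNorm, partNorm_const_smul hp, mul_left_comm _ ‖c‖ₑ, ← ENNReal.mul_iSup]

lemma alphaNorm_sub_comm (f g : X → E) :
    alphaNorm μ nm πr q p α (f - g) = alphaNorm μ nm πr q p α (g - f) := by
  rw [← neg_sub, alphaNorm, alphaNorm]
  simp_rw [partNorm_neg]

lemma alphaNorm_eq_zero_iff (hp : p ≠ 0) (hq : q ≠ 0) (hπ : ∀ A ∈ πr 1, MeasurableSet A)
    (hcount : (πr 1).Countable) (hcover : ⋃₀ πr 1 = univ) (h1 : μ (gball nm 1 1) = 1)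
    (hf : AEStronglyMeasurable f μ) :
    alphaNorm μ nm πr q p α f = 0 ↔ f =ᵐ[μ] 0 := by
  refine ⟨fun h => ae_eq_zero_of_partNorm_eq_zero hp hq hπ hcount hcover hf ?_, fun h => ?_⟩
  · exact nonpos_iff_eq_zero.1 (h ▸ partNorm_one_le_alphaNorm h1 f)
  · simp only [alphaNorm, partNorm_congr_ae h, partNorm_zero hp, mul_zero, iSup_zero]

lemma alphaNorm_le_liminf (hp : p ≠ 0) (hπ : ∀ r, 0 < r → ∀ A ∈ πr r, MeasurableSet A)
    {F : ℕ → X → E} (hF : ∀ n, AEStronglyMeasurable (F n) μ)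
    (hlim : ∀ᵐ x ∂μ, Tendsto (fun n => F n x) atTop (𝓝 (f x))) :
    alphaNorm μ nm πr q p α f ≤ liminf (fun n => alphaNorm μ nm πr q p α (F n)) atTop :=
  iSup₂_le fun r hr => calc
    _ ≤ μ (gball nm 1 r) ^ (α⁻¹.toReal - q⁻¹.toReal) *
          liminf (fun n => partNorm μ q p (πr r) (F n)) atTop :=
      mul_le_mul_right (partNorm_le_liminf hp (hπ r hr) hF hlim) _
    _ ≤ liminf (fun n => μ (gball nm 1 r) ^ (α⁻¹.toReal - q⁻¹.toReal) *
          partNorm μ q p (πr r) (F n)) atTop := by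
      have := ENNReal.le_liminf_mul (f := atTop)
        (u := fun _ : ℕ => μ (gball nm 1 r) ^ (α⁻¹.toReal - q⁻¹.toReal))
        (v := fun n => partNorm μ q p (πr r) (F n))
      rwa [liminf_const] at this
    _ ≤ _ := liminf_le_liminf (.of_forall fun n => le_alphaNorm hr (F n))

lemma exists_subseq_ae_tendsto_of_alphaNorm_cauchy [CompleteSpace E] (hq : 1 ≤ q) (hp : p ≠ 0)
    (hπ : ∀ A ∈ πr 1, MeasurableSet A) (hcount : (πr 1).Countable)
    (hcover : ⋃₀ πr 1 = univ) (h1 : μ (gball nm 1 1) = 1)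
    {F : ℕ → X → E} (hF : ∀ n, AEStronglyMeasurable (F n) μ)
    (hcau : ∀ ε : ℝ≥0∞, 0 < ε → ∃ N : ℕ, ∀ m n : ℕ, N ≤ m → N ≤ n →
      alphaNorm μ nm πr q p α (F m - F n) < ε) :
    ∃ φ : ℕ → ℕ, StrictMono φ ∧ ∀ᵐ x ∂μ, ∃ l, Tendsto (fun k => F (φ k) x) atTop (𝓝 l) := by
  obtain ⟨φ, hφ, hφcau⟩ := extraction_forall_of_eventually (P := fun k n =>
    ∀ m l, n ≤ m → n ≤ l → alphaNorm μ nm πr q p α (F m - F l) < (2⁻¹ : ℝ≥0∞) ^ k) fun k => by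
    obtain ⟨N, hN⟩ := hcau _ (ENNReal.pow_pos (by norm_num) k : (0 : ℝ≥0∞) < 2⁻¹ ^ k)
    exact eventually_atTop.2 ⟨N, fun n hn m l hm hl => hN m l (hn.trans hm) (hn.trans hl)⟩
  refine ⟨φ, hφ, ae_exists_tendsto_of_partNorm_cauchy hq hp hπ hcount hcover
    (fun k => hF (φ k)) (B := fun k => (2⁻¹ : ℝ≥0∞) ^ k) ?_ fun K j m hj hm => ?_⟩
  · simp [ENNReal.tsum_geometric]
  · exact (partNorm_one_le_alphaNorm h1 _).trans_lt
      (hφcau K _ _ (hφ.monotone hj) (hφ.monotone hm))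

lemma tendsto_alphaNorm_sub_of_ae_tendsto_subseq (hp : p ≠ 0)
    (hπ : ∀ r, 0 < r → ∀ A ∈ πr r, MeasurableSet A)
    {F : ℕ → X → E} (hF : ∀ n, AEStronglyMeasurable (F n) μ)
    (hcau : ∀ ε : ℝ≥0∞, 0 < ε → ∃ N : ℕ, ∀ m n : ℕ, N ≤ m → N ≤ n →
      alphaNorm μ nm πr q p α (F m - F n) < ε)
    {φ : ℕ → ℕ} (hφ : StrictMono φ)
    (hlim : ∀ᵐ x ∂μ, Tendsto (fun k => F (φ k) x) atTop (𝓝 (f x))) :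
    Tendsto (fun n => alphaNorm μ nm πr q p α (F n - f)) atTop (𝓝 0) := by
  refine ENNReal.tendsto_atTop_zero.2 fun ε hε => ?_
  obtain ⟨N, hN⟩ := hcau ε hε
  refine ⟨N, fun n hn => (alphaNorm_le_liminf hp hπ (fun k => (hF n).sub (hF (φ k)))
    (hlim.mono fun x hx => hx.const_sub (F n x))).trans (liminf_le_of_frequently_le' ?_)⟩
  exact ((eventually_ge_atTop N).mono fun k hk =>
    (hN n (φ k) hn (hk.trans hφ.le_apply)).le).frequently

theorem alphaNorm_complete [CompleteSpace E] (hq : 1 ≤ q) (hp : 1 ≤ p)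
    (hπ : ∀ r, 0 < r → ∀ A ∈ πr r, MeasurableSet A) (hcount : (πr 1).Countable)
    (hcover : ⋃₀ πr 1 = univ) (h1 : μ (gball nm 1 1) = 1)
    {F : ℕ → X → E} (hF : ∀ n, AEStronglyMeasurable (F n) μ)
    (hFfin : ∀ n, alphaNorm μ nm πr q p α (F n) < ∞)
    (hcau : ∀ ε : ℝ≥0∞, 0 < ε → ∃ N : ℕ, ∀ m n : ℕ, N ≤ m → N ≤ n →
      alphaNorm μ nm πr q p α (F m - F n) < ε) :
    ∃ f : X → E, AEStronglyMeasurable f μ ∧ alphaNorm μ nm πr q p α f < ∞ ∧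
      Tendsto (fun n => alphaNorm μ nm πr q p α (F n - f)) atTop (𝓝 0) := by
  have hp0 : p ≠ 0 := (zero_lt_one.trans_le hp).ne'
  obtain ⟨φ, hφ, hae⟩ := exists_subseq_ae_tendsto_of_alphaNorm_cauchy hq hp0 (hπ 1 one_pos)
    hcount hcover h1 hF hcau
  set f : X → E := fun x => limUnder atTop fun k => F (φ k) x
  have hlim : ∀ᵐ x ∂μ, Tendsto (fun k => F (φ k) x) atTop (𝓝 (f x)) :=
    hae.mono fun x => tendsto_nhds_limUnder
  have hf : AEStronglyMeasurable f μ :=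
    aestronglyMeasurable_of_tendsto_ae atTop (fun k => hF (φ k)) hlim
  have htends := tendsto_alphaNorm_sub_of_ae_tendsto_subseq hp0 hπ hF hcau hφ hlim
  obtain ⟨n, hn⟩ := (htends.eventually (gt_mem_nhds one_pos)).exists
  refine ⟨f, hf, ?_, htends⟩
  calc alphaNorm μ nm πr q p α f = alphaNorm μ nm πr q p α (F n + (f - F n)) := by
        rw [add_sub_cancel]
    _ ≤ alphaNorm μ nm πr q p α (F n) + alphaNorm μ nm πr q p α (F n - f) := by
        rw [alphaNorm_sub_comm (F n)]
        exact alphaNorm_add_le hq hp hπ (hF n) (hf.sub (hF n))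
    _ < ∞ := ENNReal.add_lt_top.2 ⟨hFfin n, hn.trans ENNReal.one_lt_top⟩

end alphaNorm

theorem statement5_general
    (μ : Measure G)
    (nm : G → ℝ) (γ ρ : ℝ)
    (hvol : ∀ r : ℝ, 0 < r → μ (gball nm 1 r) = ENNReal.ofReal (r ^ ρ))
    (πr : ℝ → Set (Set G))
    (hπr : ∀ r : ℝ, 0 < r → IsUniformPartition (πr r)
      (gball nm 1 (r / (4 * γ ^ 2)))
      (gball nm 1 (r / (4 * γ ^ 2)) * gball nm 1 (r / (4 * γ ^ 2))))
   (q p α : ℝ≥0∞) (hq1 : 1 ≤ q) (hp1 : 1 ≤ p) :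
    (∀ f g : G → ℂ, AEStronglyMeasurable f μ → AEStronglyMeasurable g μ →
        alphaNorm μ nm πr q p α (f + g) ≤
          alphaNorm μ nm πr q p α f + alphaNorm μ nm πr q p α g) ∧
    (∀ (c : ℂ) (f : G → ℂ),
        alphaNorm μ nm πr q p α (c • f) = (‖c‖₊ : ℝ≥0∞) * alphaNorm μ nm πr q p α f) ∧
    (∀ f : G → ℂ, AEStronglyMeasurable f μ →
        (alphaNorm μ nm πr q p α f = 0 ↔ f =ᵐ[μ] 0)) ∧
    (∀ F : ℕ → G → ℂ, (∀ n, AEStronglyMeasurable (F n) μ) →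
      (∀ n, alphaNorm μ nm πr q p α (F n) < ∞) →
      (∀ ε : ℝ≥0∞, 0 < ε → ∃ N : ℕ, ∀ m n : ℕ, N ≤ m → N ≤ n →
        alphaNorm μ nm πr q p α (F m - F n) < ε) →
      ∃ f : G → ℂ, AEStronglyMeasurable f μ ∧ alphaNorm μ nm πr q p α f < ∞ ∧
        Tendsto (fun n => alphaNorm μ nm πr q p α (F n - f)) atTop (𝓝 0)) := by
  have hπ : ∀ r, 0 < r → ∀ A ∈ πr r, MeasurableSet A := fun r hr => (hπr r hr).2.1
  obtain ⟨hcount, -, -, hcover, -⟩ := hπr 1 one_pos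
  have h1 : μ (gball nm 1 1) = 1 := by simp [hvol 1 one_pos]
  have hp0 : p ≠ 0 := (zero_lt_one.trans_le hp1).ne'
  have hq0 : q ≠ 0 := (zero_lt_one.trans_le hq1).ne'
  exact ⟨fun f g hf hg => alphaNorm_add_le hq1 hp1 hπ hf hg,
    fun c f => alphaNorm_const_smul hp0 c f,
    fun f hf => alphaNorm_eq_zero_iff hp0 hq0 (hπ 1 one_pos) hcount hcover h1 hf,
    fun F hF hFfin hcau => alphaNorm_complete hq1 hp1 hπ hcount hcover h1 hF hFfin hcau⟩

theorem statement5
    (μ : Measure G) [μ.IsHaarMeasure]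
    (nm : G → ℝ) (γ ρ : ℝ)
    (hnm_cont : Continuous nm)
    (hnm_nonneg : ∀ x : G, 0 ≤ nm x)
    (hnm_zero : ∀ x : G, nm x = 0 ↔ x = 1)
    (hnm_inv : ∀ x : G, nm x⁻¹ = nm x)
    (hγ : 1 ≤ γ)
    (hnm_mul : ∀ x y : G, nm (x * y) ≤ γ * (nm x + nm y))
    (hball_cpt : ∀ (x : G) (r : ℝ), 0 < r → IsCompact (closure (gball nm x r)))
    (hρ : 0 < ρ)
    (hvol : ∀ r : ℝ, 0 < r → μ (gball nm 1 r) = ENNReal.ofReal (r ^ ρ))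
    (πr : ℝ → Set (Set G))
    (hπr : ∀ r : ℝ, 0 < r → IsUniformPartition (πr r)
      (gball nm 1 (r / (4 * γ ^ 2)))
      (gball nm 1 (r / (4 * γ ^ 2)) * gball nm 1 (r / (4 * γ ^ 2))))
   (q p α : ℝ≥0∞) (hq1 : 1 ≤ q) (hp1 : 1 ≤ p) (hα1 : 1 ≤ α) :
    (∀ f g : G → ℂ, AEStronglyMeasurable f μ → AEStronglyMeasurable g μ →
        alphaNorm μ nm πr q p α (f + g) ≤
          alphaNorm μ nm πr q p α f + alphaNorm μ nm πr q p α g) ∧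
    (∀ (c : ℂ) (f : G → ℂ),
        alphaNorm μ nm πr q p α (c • f) = (‖c‖₊ : ℝ≥0∞) * alphaNorm μ nm πr q p α f) ∧
    (∀ f : G → ℂ, AEStronglyMeasurable f μ →
        (alphaNorm μ nm πr q p α f = 0 ↔ f =ᵐ[μ] 0)) ∧
    (∀ F : ℕ → G → ℂ, (∀ n, AEStronglyMeasurable (F n) μ) →
      (∀ n, alphaNorm μ nm πr q p α (F n) < ∞) →
      (∀ ε : ℝ≥0∞, 0 < ε → ∃ N : ℕ, ∀ m n : ℕ, N ≤ m → N ≤ n →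
        alphaNorm μ nm πr q p α (F m - F n) < ε) →
      ∃ f : G → ℂ, AEStronglyMeasurable f μ ∧ alphaNorm μ nm πr q p α f < ∞ ∧
        Tendsto (fun n => alphaNorm μ nm πr q p α (F n - f)) atTop (𝓝 0)) :=
  statement5_general μ nm γ ρ hvol πr hπr q p α hq1 hp1
end

section
/- Let 1 ≤ p < θ < ∞ and 1 ≤ q ≤ ∞, with θ', p', q' the conjugate exponents. Define g(x) = (γ + γ|x|)^{−ρ/θ'} for x ∈ G, and k(θ;p;a) = ‖(|·|^{−ρ/θ'})·χ_{G∖B(e,a)}‖_{p'}. Then for every ε ∈ (0, 2γ) and every r ∈ (0, ε/(2γ)): _{B(e,r)}‖g·χ_{G∖B(e,ε)}‖_{q',p'} ≤ k(θ;p;ε/(2γ)) · λ(B(e,r))^{1/q'}. -/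
/-!
Write `s = ρ/θ'` and `a = ε/(2γ)`. For `x ∈ yB(e,r)` with `|x| ≥ ε`, the quasi-triangle inequality
gives `|y| > a` and `|y| ≤ γ + γ|x|` (as `r < a < 1`), so `(γ + γ|x|)^{-s} ≤ |y|^{-s}`: on each
translate `yB(e,r)` the function is dominated by the constant `c(y) = |y|^{-s} χ_{G∖B(e,a)}(y)`.
Left invariance of `λ` then bounds the local `L^{q'}` norm by `c(y) λ(B(e,r))^{1/q'}`, and taking the
`L^{p'}` norm in `y` gives the claim.
-/

open MeasureTheory ENNReal NNReal Set Filter Topology Pointwise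

variable {G : Type*} [Group G] [TopologicalSpace G] [IsTopologicalGroup G]
  [T2Space G] [LocallyCompactSpace G] [SigmaCompactSpace G]
  [MeasurableSpace G] [BorelSpace G]

section Lp

variable {α E F : Type*} [MeasurableSpace α] [NormedAddCommGroup E] [NormedAddCommGroup F]

lemma eLpNorm_indicator_le_of_norm_le {μ : Measure α} {s : Set α} {f : α → E} {b : F}
    (hf : ∀ x ∈ s, ‖f x‖ ≤ ‖b‖) (q : ℝ≥0∞) :
    eLpNorm (s.indicator f) q μ ≤ ‖b‖ₑ * μ s ^ (1 / q.toReal) := by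
  refine (eLpNorm_mono fun x => ?_).trans (eLpNorm_indicator_const_le b q)
  by_cases hx : x ∈ s
  · simpa [hx] using hf x hx
  · simp [hx]

end Lp

section BlockNorm

variable {G : Type*} [Group G] [MeasurableSpace G]
  {E F : Type*} [NormedAddCommGroup E] [NormedAddCommGroup F] [NormedSpace ℝ F]
  {μ : Measure G} {q p : ℝ≥0∞} {B : Set G} {f : G → E}

lemma blockNorm_eq_eLpNorm (hp : p ≠ 0) :
    blockNorm μ q p B f = eLpNorm (fun y => eLpNorm ((y • B).indicator f) q μ) p μ := by
  unfold blockNorm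
  split_ifs with hp_top
  · simp [hp_top, eLpNorm_exponent_top, eLpNormEssSup]
  · rw [eLpNorm_eq_lintegral_rpow_enorm_toReal hp hp_top]
    rfl

lemma blockNorm_le_eLpNorm_mul (hp : p ≠ 0) {c : G → F} {M : ℝ≥0∞} (hM : M ≠ ∞)
    (h : ∀ y, eLpNorm ((y • B).indicator f) q μ ≤ ‖c y‖ₑ * M) :
    blockNorm μ q p B f ≤ eLpNorm c p μ * M := by
  rw [blockNorm_eq_eLpNorm hp]
  have hM' : ‖M.toReal‖ₑ = M := by
    rw [Real.enorm_of_nonneg ENNReal.toReal_nonneg, ENNReal.ofReal_toReal hM]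
  calc _ ≤ eLpNorm (M.toReal • c) p μ := eLpNorm_mono_enorm fun y => by
          simpa [enorm_smul, hM', mul_comm] using h y
    _ = eLpNorm c p μ * M := by rw [eLpNorm_const_smul, hM', mul_comm]

end BlockNorm

section QuasiNorm

variable {G : Type*} [Group G] {nm : G → ℝ} {γ : ℝ}

lemma smul_gball_one (y : G) (r : ℝ) : y • gball nm 1 r = gball nm y r := by
  ext x
  simp [mem_smul_set_iff_inv_smul_mem, gball]

lemma div_lt_nm_of_mem_gball (hnm_mul : ∀ x y : G, nm (x * y) ≤ γ * (nm x + nm y))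
    (hγ : 0 < γ) {x y : G} {ε r : ℝ} (hx : x ∈ gball nm y r) (hxε : ε ≤ nm x)
    (hr : r ≤ ε / (2 * γ)) : ε / (2 * γ) < nm y := by
  have hx' : nm (y⁻¹ * x) < r := by simpa [gball] using hx
  have hmul : nm x ≤ γ * (nm y + nm (y⁻¹ * x)) := by simpa using hnm_mul y (y⁻¹ * x)
  have hγr : r * (2 * γ) ≤ ε := (le_div_iff₀ (by positivity)).1 hr
  rw [div_lt_iff₀ (by positivity)]
  nlinarith

lemma nm_le_of_mem_gball (hnm_inv : ∀ x : G, nm x⁻¹ = nm x)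
    (hnm_mul : ∀ x y : G, nm (x * y) ≤ γ * (nm x + nm y))
    (hγ : 0 ≤ γ) {x y : G} {r : ℝ} (hx : x ∈ gball nm y r) (hr : r ≤ 1) :
    nm y ≤ γ + γ * nm x := by
  have hx' : nm (x⁻¹ * y) < r := by
    simpa [gball, ← hnm_inv (x⁻¹ * y)] using hx
  have hmul : nm y ≤ γ * (nm x + nm (x⁻¹ * y)) := by simpa using hnm_mul x (x⁻¹ * y)
  nlinarith

lemma norm_indicator_rpow_le (hnm_inv : ∀ x : G, nm x⁻¹ = nm x)
    (hnm_mul : ∀ x y : G, nm (x * y) ≤ γ * (nm x + nm y)) (hγ : 0 < γ)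
    {s ε r : ℝ} (hs : 0 ≤ s) (hε : 0 < ε) (hr : r ≤ ε / (2 * γ)) (hr1 : r ≤ 1)
    {x y : G} (hx : x ∈ gball nm y r) :
    ‖((gball nm 1 ε)ᶜ.indicator fun x => (γ + γ * nm x) ^ (-s)) x‖ ≤
      ‖((gball nm 1 (ε / (2 * γ)))ᶜ.indicator fun y => nm y ^ (-s)) y‖ := by
  by_cases hxε : x ∈ (gball nm 1 ε)ᶜ
  · have hy := div_lt_nm_of_mem_gball hnm_mul hγ hx (by simpa [gball] using hxε) hr
    have hy_pos : 0 < nm y := (by positivity : 0 < ε / (2 * γ)).trans hy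
    have hyx := nm_le_of_mem_gball hnm_inv hnm_mul hγ.le hx hr1
    have hyc : y ∈ (gball nm 1 (ε / (2 * γ)))ᶜ := by simpa [gball] using hy.le
    rw [indicator_of_mem hxε, indicator_of_mem hyc,
      Real.norm_of_nonneg (Real.rpow_nonneg (hy_pos.le.trans hyx) _),
      Real.norm_of_nonneg (Real.rpow_nonneg hy_pos.le _)]
    exact Real.rpow_le_rpow_of_nonpos hy_pos hyx (neg_nonpos.2 hs)
  · simp [indicator_of_notMem hxε]

end QuasiNorm

theorem statement9_general
    (μ : Measure G) [μ.IsHaarMeasure]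
    (nm : G → ℝ) (γ ρ : ℝ)
    (hnm_inv : ∀ x : G, nm x⁻¹ = nm x)
    (hγ : 1 ≤ γ)
    (hnm_mul : ∀ x y : G, nm (x * y) ≤ γ * (nm x + nm y))
    (hρ : 0 < ρ)
    (hvol : ∀ r : ℝ, 0 < r → μ (gball nm 1 r) = ENNReal.ofReal (r ^ ρ))
   (p θ θ' : ℝ) (hp1 : 1 ≤ p) (hpθ : p < θ) (hθ' : θ' = θ / (θ - 1))
    (p' : ℝ≥0∞) (hp' : 1 / ENNReal.ofReal p + 1 / p' = 1)
    (q' : ℝ≥0∞) :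
    ∀ ε : ℝ, 0 < ε → ε < 2 * γ → ∀ r : ℝ, 0 < r → r < ε / (2 * γ) →
      blockNorm μ q' p' (gball nm 1 r)
          (((gball nm 1 ε)ᶜ).indicator fun x => (γ + γ * nm x) ^ (-(ρ / θ'))) ≤
        eLpNorm (((gball nm 1 (ε / (2 * γ)))ᶜ).indicator fun y => nm y ^ (-(ρ / θ'))) p' μ *
          μ (gball nm 1 r) ^ q'⁻¹.toReal := by
  intro ε hε hε2 r hr hra
  have hγ0 : 0 < γ := by linarith
  have hs : 0 ≤ ρ / θ' := by
    rw [hθ']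
    exact div_nonneg hρ.le (div_pos (by linarith) (by linarith)).le
  have hr1 : r ≤ 1 := hra.le.trans ((div_le_one (by positivity)).2 hε2.le)
  have hp'0 : p' ≠ 0 := by
    rintro rfl
    simp at hp'
  have hB : μ (gball nm 1 r) ^ q'⁻¹.toReal ≠ ∞ := by
    rw [hvol r hr]
    exact rpow_ne_top_of_nonneg toReal_nonneg ofReal_ne_top
  refine blockNorm_le_eLpNorm_mul hp'0 hB fun y => ?_
  refine (eLpNorm_indicator_le_of_norm_le (fun x hx => norm_indicator_rpow_le hnm_inv hnm_mul
    hγ0 hs hε hra.le hr1 (by rwa [smul_gball_one] at hx)) q').trans_eq ?_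
  rw [measure_smul, one_div, ← ENNReal.toReal_inv]

theorem statement9
    (μ : Measure G) [μ.IsHaarMeasure]
    (nm : G → ℝ) (γ ρ : ℝ)
    (hnm_cont : Continuous nm)
    (hnm_nonneg : ∀ x : G, 0 ≤ nm x)
    (hnm_zero : ∀ x : G, nm x = 0 ↔ x = 1)
    (hnm_inv : ∀ x : G, nm x⁻¹ = nm x)
    (hγ : 1 ≤ γ)
    (hnm_mul : ∀ x y : G, nm (x * y) ≤ γ * (nm x + nm y))
    (hball_cpt : ∀ (x : G) (r : ℝ), 0 < r → IsCompact (closure (gball nm x r)))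
    (hρ : 0 < ρ)
    (hvol : ∀ r : ℝ, 0 < r → μ (gball nm 1 r) = ENNReal.ofReal (r ^ ρ))
   (p θ θ' : ℝ) (hp1 : 1 ≤ p) (hpθ : p < θ) (hθ' : θ' = θ / (θ - 1))
    (p' : ℝ≥0∞) (hp' : 1 / ENNReal.ofReal p + 1 / p' = 1)
    (q q' : ℝ≥0∞) (hq1 : 1 ≤ q) (hq' : 1 / q + 1 / q' = 1) :
    ∀ ε : ℝ, 0 < ε → ε < 2 * γ → ∀ r : ℝ, 0 < r → r < ε / (2 * γ) →
      blockNorm μ q' p' (gball nm 1 r)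
          (((gball nm 1 ε)ᶜ).indicator fun x => (γ + γ * nm x) ^ (-(ρ / θ'))) ≤
        eLpNorm (((gball nm 1 (ε / (2 * γ)))ᶜ).indicator fun y => nm y ^ (-(ρ / θ'))) p' μ *
          μ (gball nm 1 r) ^ q'⁻¹.toReal :=
  statement9_general μ nm γ ρ hnm_inv hγ hnm_mul hρ hvol p θ θ' hp1 hpθ hθ' p' hp' q'
end
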